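/- arXiv:1209.3628 — 12 statements merged into one kernel-verified Lean document; each statement's English description precedes it below -/
import Mathlib

section
/- Let c > 0 and r ≥ 1 + c with r > (log n)/(log 2). Then for every real n ≥ 1, the series ∑_{i=1}^∞ (n · log i)/(i^r + n) is bounded above by (1 + 2/c + 2/(c² log 2)) · (log 2) · n · 2^{-r}. -/
/-!
Each term is at most `n * log i * i ^ (-r)`, and the sum over `i ≥ 3` is compared with
`∫ x in 2..∞, log x * x ^ (-r) = 2 ^ (1 - r) * (log 2 / (r - 1) + 1 / (r - 1) ^ 2)`,
which is at most `2 * 2 ^ (-r) * (log 2 / c + 1 / c ^ 2)`; the term `i = 2` contributes the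
remaining `log 2 * n * 2 ^ (-r)`. Since `log x * x ^ (-r)` decreases on `[exp (1 / r), ∞)`,
for `r ≥ 3 / 2` the sum over `i ≥ 3` lies below the integral from `2`. For `r ≤ 3 / 2` the term
`i = 3` can exceed the integral over `[2, 3]`, but only by less than `n * log 2 * 4 ^ (-r) / 2`,
and because `n ≥ 1` the term `i = 2` falls short of `n * log 2 * 2 ^ (-r)` by at least that much.
-/

open Real Finset MeasureTheory

lemma hasDerivAt_log_mul_rpow_neg {r x : ℝ} (hx : 0 < x) :
    HasDerivAt (fun y => log y * y ^ (-r)) ((1 - r * log x) * x ^ (-r - 1)) x := by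
  refine ((hasDerivAt_log hx.ne').mul
    (hasDerivAt_rpow_const (p := -r) (Or.inl hx.ne'))).congr_deriv ?_
  rw [rpow_sub hx, rpow_one]
  field_simp
  ring

lemma antitoneOn_log_mul_rpow_neg {r a : ℝ} (ha : 0 < a) (hr : 0 ≤ r) (hra : 1 ≤ r * log a) :
    AntitoneOn (fun x => log x * x ^ (-r)) (Set.Ici a) := by
  have hpos : ∀ x ∈ Set.Ici a, 0 < x := fun x hx => ha.trans_le hx
  refine antitoneOn_of_hasDerivWithinAt_nonpos (convex_Ici a) ?_
    (fun x hx => (hasDerivAt_log_mul_rpow_neg (hpos x (interior_subset hx))).hasDerivWithinAt)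
    fun x hx => ?_
  · exact fun x hx => ((continuousAt_log (hpos x hx).ne').mul
      (continuousAt_rpow_const x (-r) (Or.inl (hpos x hx).ne'))).continuousWithinAt
  · rw [interior_Ici] at hx
    have hlog : log a ≤ log x := log_le_log ha hx.le
    have hrlog : 1 ≤ r * log x := hra.trans (mul_le_mul_of_nonneg_left hlog hr)
    exact mul_nonpos_of_nonpos_of_nonneg (by linarith) (rpow_nonneg (ha.trans hx).le _)

lemma intervalIntegrable_log_mul_rpow_neg {r a b : ℝ} (ha : 0 < a) (hb : 0 < b) :
    IntervalIntegrable (fun x => log x * x ^ (-r)) volume a b := by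
  refine ContinuousOn.intervalIntegrable fun x hx => ?_
  have hx0 : x ≠ 0 := ((lt_min ha hb).trans_le hx.1).ne'
  exact ((continuousAt_log hx0).mul
    (continuousAt_rpow_const x (-r) (Or.inl hx0))).continuousWithinAt

/-- `-x ^ (1 - r) * (log x / (r - 1) + 1 / (r - 1) ^ 2)` is a primitive of `log x * x ^ (-r)`,
nonpositive for `x ≥ 1`. -/
lemma integral_log_mul_rpow_neg_le {r a b : ℝ} (hr : 1 < r) (ha : 1 ≤ a) (hab : a ≤ b) :
    ∫ x in a..b, log x * x ^ (-r) ≤ a ^ (1 - r) * (log a / (r - 1) + 1 / (r - 1) ^ 2) := by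
  set G : ℝ → ℝ := fun x => -(x ^ (1 - r) * (log x / (r - 1) + 1 / (r - 1) ^ 2))
  have hr1 : r - 1 ≠ 0 := by linarith
  have hG : ∀ x, 0 < x → HasDerivAt G (log x * x ^ (-r)) x := by
    intro x hx
    refine ((hasDerivAt_rpow_const (p := 1 - r) (Or.inl hx.ne')).mul
      (((hasDerivAt_log hx.ne').div_const (r - 1)).add_const (1 / (r - 1) ^ 2))).neg.congr_deriv ?_
    rw [show 1 - r - 1 = -r by ring, show 1 - r = -r + 1 by ring, rpow_add_one hx.ne']
    field_simp
    ring
  have ha0 : 0 < a := by linarith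
  rw [intervalIntegral.integral_eq_sub_of_hasDerivAt
    (fun x hx => hG x (ha0.trans_le (Set.uIcc_of_le hab ▸ hx).1))
    (intervalIntegrable_log_mul_rpow_neg ha0 (ha0.trans_le hab))]
  have hGb : 0 ≤ b ^ (1 - r) * (log b / (r - 1) + 1 / (r - 1) ^ 2) := by
    have : 0 ≤ log b := log_nonneg (ha.trans hab)
    have : 0 < r - 1 := by linarith
    have : 0 < b := by linarith
    positivity
  simp only [G]
  linarith

lemma nineteen_mul_log_two_le_twelve_mul_log_three : 19 * log 2 ≤ 12 * log 3 := by
  have h := log_le_log (by positivity) (show (2 : ℝ) ^ 19 ≤ 3 ^ 12 by norm_num)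
  rwa [log_pow, log_pow, Nat.cast_ofNat, Nat.cast_ofNat] at h

lemma log_three_mul_rpow_neg_le {r : ℝ} (hr₀ : 0 ≤ r) (hr₂ : r ≤ 2) :
    log 3 * 3 ^ (-r) ≤ (∫ x in (2 : ℝ)..3, log x * x ^ (-r)) + log 2 * 4 ^ (-r) / 2 := by
  have hmono : ∫ x in (2 : ℝ)..3, log x * 3 ^ (-r) ≤ ∫ x in (2 : ℝ)..3, log x * x ^ (-r) := by
    refine intervalIntegral.integral_mono_on (by norm_num)
      (intervalIntegral.intervalIntegrable_log'.mul_const _)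
      (intervalIntegrable_log_mul_rpow_neg (by norm_num) (by norm_num)) fun x hx => ?_
    exact mul_le_mul_of_nonneg_left
      (rpow_le_rpow_of_nonpos (by linarith [hx.1]) hx.2 (by linarith))
      (log_nonneg (by linarith [hx.1]))
  rw [intervalIntegral.integral_mul_const, integral_log] at hmono
  have h3 : (3 : ℝ) ^ (-r) = (4 / 3) ^ r * 4 ^ (-r) := by
    rw [div_rpow (by norm_num) (by norm_num), rpow_neg (by norm_num), rpow_neg (by norm_num)]
    field_simp
  have hpow : (4 / 3 : ℝ) ^ r ≤ 16 / 9 := by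
    calc (4 / 3 : ℝ) ^ r ≤ (4 / 3) ^ (2 : ℝ) := rpow_le_rpow_of_exponent_le (by norm_num) hr₂
      _ = 16 / 9 := by norm_num
  have hlog3 := nineteen_mul_log_two_le_twelve_mul_log_three
  have hlog2 := log_two_gt_d9
  have h4 : (0 : ℝ) < 4 ^ (-r) := rpow_pos_of_pos (by norm_num) _
  have h43 : (0 : ℝ) ≤ (4 / 3) ^ r := rpow_nonneg (by norm_num) _
  rw [h3] at hmono ⊢
  have hα : 1 + 2 * log 2 - 2 * log 3 ≤ 1 - 7 / 6 * log 2 := by linarith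
  have hβ : 0 ≤ 1 - 7 / 6 * log 2 := by linarith [log_two_lt_d9]
  have hγ : 0 ≤ log 2 / 2 - 16 / 9 * (1 - 7 / 6 * log 2) := by linarith
  nlinarith [mul_le_mul_of_nonneg_right hα (mul_nonneg h43 h4.le),
    mul_le_mul_of_nonneg_left (mul_le_mul_of_nonneg_right hpow h4.le) hβ, mul_nonneg hγ h4.le]

lemma sum_range_log_mul_rpow_neg_le {r : ℝ} (hr : 1 < r) (N : ℕ) :
    ∑ i ∈ range N, log ((i : ℝ) + 3) * ((i : ℝ) + 3) ^ (-r)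
      ≤ 2 ^ (1 - r) * (log 2 / (r - 1) + 1 / (r - 1) ^ 2) + log 2 * 4 ^ (-r) / 2 := by
  set f : ℝ → ℝ := fun x => log x * x ^ (-r)
  have hslack : 0 ≤ log 2 * (4 : ℝ) ^ (-r) / 2 := by positivity
  have htail : ∀ b : ℝ, 2 ≤ b → ∫ x in (2 : ℝ)..b, f x
      ≤ 2 ^ (1 - r) * (log 2 / (r - 1) + 1 / (r - 1) ^ 2) :=
    fun b hb => integral_log_mul_rpow_neg_le hr one_le_two hb
  rcases le_total (3 / 2) r with hr' | hr'
  · have hanti : AntitoneOn f (Set.Icc 2 (2 + N)) :=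
      (antitoneOn_log_mul_rpow_neg two_pos (by linarith)
        (by nlinarith [log_two_gt_d9])).mono Set.Icc_subset_Ici_self
    have hsum := (sum_congr rfl fun (i : ℕ) _ => show log ((i : ℝ) + 3) * ((i : ℝ) + 3) ^ (-r)
      = f (2 + (i + 1 : ℕ)) by simp only [f]; push_cast; ring_nf).trans_le hanti.sum_le_integral
    linarith [htail (2 + N) (by simp)]
  · cases N with
    | zero =>
      have hK := htail 2 le_rfl
      rw [intervalIntegral.integral_same] at hK
      rw [sum_range_zero]
      linarith
    | succ M =>
      have hanti : AntitoneOn f (Set.Icc 3 (3 + M)) :=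
        (antitoneOn_log_mul_rpow_neg three_pos (by linarith)
          (by nlinarith [log_three_gt_d9])).mono Set.Icc_subset_Ici_self
      have hsum := (sum_congr rfl fun (i : ℕ) _ => show log (((i + 1 : ℕ) : ℝ) + 3)
        * (((i + 1 : ℕ) : ℝ) + 3) ^ (-r) = f (3 + (i + 1 : ℕ)) by rw [add_comm]).trans_le
        hanti.sum_le_integral
      have hsplit := intervalIntegral.integral_add_adjacent_intervals
        (intervalIntegrable_log_mul_rpow_neg (r := r) two_pos three_pos)
        (intervalIntegrable_log_mul_rpow_neg (r := r) three_pos (by positivity : (0 : ℝ) < 3 + M))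
      rw [sum_range_succ', Nat.cast_zero, zero_add]
      linarith [htail (3 + M) (by linarith [M.cast_nonneg (α := ℝ)]),
        log_three_mul_rpow_neg_le (r := r) (by linarith) (by linarith)]

lemma mul_log_div_rpow_add_le {n x r : ℝ} (hn : 0 ≤ n) (hx : 1 ≤ x) :
    n * log x / (x ^ r + n) ≤ n * (log x * x ^ (-r)) := by
  have hxr : 0 < x ^ r := rpow_pos_of_pos (by linarith) r
  calc n * log x / (x ^ r + n) ≤ n * log x / x ^ r := by
        gcongr
        · exact mul_nonneg hn (log_nonneg hx)
        · linarith
    _ = n * (log x * x ^ (-r)) := by rw [rpow_neg (by linarith)]; ring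

lemma mul_log_two_div_rpow_add_le {n r : ℝ} (hn : 1 ≤ n) (hr : 0 ≤ r) :
    n * log 2 / (2 ^ r + n) ≤ n * log 2 * 2 ^ (-r) * (1 - 2 ^ (-r) / 2) := by
  have hpos : (0 : ℝ) < 2 ^ r := by positivity
  have hB : (2 : ℝ) ^ (-r) * 2 ^ r = 1 := by rw [rpow_neg zero_le_two, inv_mul_cancel₀ hpos.ne']
  have hB1 : (2 : ℝ) ^ (-r) ≤ 1 := rpow_le_one_of_one_le_of_nonpos one_le_two (by linarith)
  have hB0 : (0 : ℝ) < 2 ^ (-r) := by positivity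
  rw [div_le_iff₀ (by linarith)]
  have hgap : 0 ≤ n * log 2 * 2 ^ (-r) * (n - 1 / 2 - n * 2 ^ (-r) / 2) := by
    have : 0 ≤ n - 1 / 2 - n * 2 ^ (-r) / 2 := by nlinarith
    have : 0 < log 2 := log_pos one_lt_two
    positivity
  linear_combination hgap - n * log 2 * (1 - 2 ^ (-r) / 2) * hB

theorem stmt_1_general (c r n : ℝ) (hc : 0 < c) (hr : 1 + c ≤ r) (hn : 1 ≤ n) :
    ∑' i : ℕ, n * Real.log ((i : ℝ) + 1) / (((i : ℝ) + 1) ^ r + n)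
      ≤ (1 + 2 / c + 2 / (c ^ 2 * Real.log 2)) * Real.log 2 * n * 2 ^ (-r) := by
  set a : ℕ → ℝ := fun i => n * log ((i : ℝ) + 1) / (((i : ℝ) + 1) ^ r + n)
  set B : ℝ := 2 ^ (-r)
  have hx : ∀ i : ℕ, (1 : ℝ) ≤ i + 1 := fun i => by linarith [i.cast_nonneg (α := ℝ)]
  have ha : ∀ i, 0 ≤ a i := fun i =>
    div_nonneg (mul_nonneg (by linarith) (log_nonneg (hx i))) (by positivity)
  have h2 : (2 : ℝ) ^ (1 - r) = 2 * B := by rw [sub_eq_neg_add, rpow_add two_pos, rpow_one]; ring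
  have h4 : (4 : ℝ) ^ (-r) = B * B := by
    rw [← mul_rpow zero_le_two zero_le_two]; norm_num
  have htail : log 2 / (r - 1) + 1 / (r - 1) ^ 2 ≤ log 2 / c + 1 / c ^ 2 := by
    have := log_pos one_lt_two
    gcongr <;> linarith
  refine tsum_le_of_sum_range_le ha fun N => ?_
  calc ∑ i ∈ range N, a i ≤ ∑ i ∈ range (N + 2), a i :=
        sum_le_sum_of_subset_of_nonneg (range_subset_range.2 (by omega)) fun i _ _ => ha i
    _ = ∑ i ∈ range N, a (i + 2) + a 1 + a 0 := by rw [sum_range_succ', sum_range_succ']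
    _ ≤ n * ∑ i ∈ range N, log ((i : ℝ) + 3) * ((i : ℝ) + 3) ^ (-r)
          + n * log 2 * B * (1 - B / 2) + 0 := by
        gcongr ?_ + ?_ + ?_
        · rw [mul_sum]
          refine sum_le_sum fun i _ => ?_
          have hi : ((i + 2 : ℕ) : ℝ) + 1 = i + 3 := by push_cast; ring
          simpa only [a, hi] using mul_log_div_rpow_add_le (r := r) (by linarith) (hx (i + 2))
        · simpa [a, one_add_one_eq_two] using mul_log_two_div_rpow_add_le hn (by linarith)
        · simp
    _ ≤ n * (2 ^ (1 - r) * (log 2 / (r - 1) + 1 / (r - 1) ^ 2) + log 2 * 4 ^ (-r) / 2)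
          + n * log 2 * B * (1 - B / 2) + 0 := by
        gcongr
        exact sum_range_log_mul_rpow_neg_le (by linarith) N
    _ = n * log 2 * B + 2 * n * B * (log 2 / (r - 1) + 1 / (r - 1) ^ 2) := by
        rw [h2, h4]; ring
    _ ≤ n * log 2 * B + 2 * n * B * (log 2 / c + 1 / c ^ 2) := by gcongr
    _ = (1 + 2 / c + 2 / (c ^ 2 * log 2)) * log 2 * n * B := by
        have := log_pos one_lt_two
        field_simp
        ring

/-- Lemma 9.1(ii): for c > 0, r ≥ 1 + c with r > log n / log 2, and n ≥ 1,
∑_{i=1}^∞ n log i / (i^r + n) ≤ (1 + 2/c + 2/(c² log 2)) (log 2) n 2^{-r}. -/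
theorem stmt_1 (c r n : ℝ) (hc : 0 < c) (hr : 1 + c ≤ r)
    (hr2 : Real.log n / Real.log 2 < r) (hn : 1 ≤ n) :
    ∑' i : ℕ, n * Real.log ((i : ℝ) + 1) / (((i : ℝ) + 1) ^ r + n)
      ≤ (1 + 2 / c + 2 / (c ^ 2 * Real.log 2)) * Real.log 2 * n * 2 ^ (-r) :=
  stmt_1_general c r n hc hr hn
end

section
/- For any reals m > 0, l ≥ 1, r₀ > 0, r ∈ (0, r₀], s ∈ (0, rl − 2], and n ≥ e^{2 m r₀}, the series ∑_{i=1}^∞ i^s (log i)^m / (i^r + n)^l is bounded above by 4 · n^{(1 + s − l r)/r} · (log n)^m / r^m. -/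
/-!
Put `N = n^{1/r}`, so that `n = N^r` and `log N = log n / r ≥ 2m`. Each of the at most `N` terms
with `i ≤ N` is at most `N^{s-rl} (log N)^m`. For `i ≥ N`, the bound `log N ≥ 2m` gives
`(log i)^m ≤ (log N)^m (i/N)^{1/2}`, so these terms are at most `(log N)^m N^{-1/2} i^{-c}` with
`c = rl - s - 1/2 ≥ 3/2`; telescoping against `i^{1-c}` bounds their sum by
`3 N^{1+s-rl} (log N)^m`.
-/

open Real Finset

noncomputable def seriesTerm (m l r s n x : ℝ) : ℝ :=
  x ^ s * log x ^ m / (x ^ r + n) ^ l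

lemma one_add_mul_sub_one_le_rpow {t p : ℝ} (ht : 0 < t) (hp : p ≤ 0) :
    1 + p * (t - 1) ≤ t ^ p := by
  rw [rpow_def_of_pos ht]
  calc 1 + p * (t - 1) ≤ log t * p + 1 := by
        nlinarith [mul_le_mul_of_nonpos_left (log_le_sub_one_of_pos ht) hp]
    _ ≤ exp (log t * p) := add_one_le_exp _

-- The tangent line of the convex function `t ↦ t ^ (1 - c)` at `x + 1`, evaluated at `x`.
lemma mul_rpow_neg_le_rpow_sub_rpow {c x : ℝ} (hc : 1 ≤ c) (hx : 0 < x) :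
    (c - 1) * (x + 1) ^ (-c) ≤ x ^ (1 - c) - (x + 1) ^ (1 - c) := by
  have hx1 : 0 < x + 1 := by linarith
  have hbern : (c - 1) / (x + 1) ≤ (x / (x + 1)) ^ (1 - c) - 1 := by
    have h := one_add_mul_sub_one_le_rpow (div_pos hx hx1) (by linarith : 1 - c ≤ 0)
    have : (1 - c) * (x / (x + 1) - 1) = (c - 1) / (x + 1) := by field_simp; ring
    linarith
  have hsplit : x ^ (1 - c) = (x + 1) ^ (1 - c) * (x / (x + 1)) ^ (1 - c) := by
    rw [← mul_rpow hx1.le (by positivity), mul_div_cancel₀ _ hx1.ne']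
  have hpow : (x + 1) ^ (-c) = (x + 1) ^ (1 - c) / (x + 1) := by
    rw [← rpow_sub_one hx1.ne']; ring_nf
  calc (c - 1) * (x + 1) ^ (-c) = (x + 1) ^ (1 - c) * ((c - 1) / (x + 1)) := by
        rw [hpow]; ring
    _ ≤ (x + 1) ^ (1 - c) * ((x / (x + 1)) ^ (1 - c) - 1) := by gcongr
    _ = x ^ (1 - c) - (x + 1) ^ (1 - c) := by rw [hsplit]; ring

lemma sum_range_rpow_neg_le {c y : ℝ} (hc : 1 < c) (hy : 0 < y) (M : ℕ) :
    ∑ i ∈ range M, (y + i) ^ (-c) ≤ y ^ (-c) + y ^ (1 - c) / (c - 1) := by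
  cases M with
  | zero => simp only [range_zero, sum_empty]; positivity
  | succ M =>
    rw [sum_range_succ', Nat.cast_zero, add_zero, add_comm]
    gcongr
    rw [le_div_iff₀ (by linarith), sum_mul]
    calc ∑ i ∈ range M, (y + ↑(i + 1)) ^ (-c) * (c - 1)
        ≤ ∑ i ∈ range M, ((y + i) ^ (1 - c) - (y + ↑(i + 1)) ^ (1 - c)) := by
          gcongr with i
          push_cast
          rw [mul_comm, ← add_assoc]
          exact mul_rpow_neg_le_rpow_sub_rpow hc.le (by positivity)
      _ = y ^ (1 - c) - (y + M) ^ (1 - c) := by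
          rw [sum_range_sub' (fun i : ℕ => (y + i) ^ (1 - c))]; simp
      _ ≤ y ^ (1 - c) := sub_le_self _ (by positivity)

lemma log_rpow_le_of_two_mul_le_log {m N x : ℝ} (hm : 0 ≤ m) (hN : 1 < N)
    (hmN : 2 * m ≤ log N) (hx : N ≤ x) :
    log x ^ m ≤ log N ^ m * (x / N) ^ (1 / 2 : ℝ) := by
  have hN0 : 0 < N := by linarith
  have hL : 0 < log N := log_pos hN
  have hLu : log N ≤ log x := log_le_log hN0 hx
  have hu : 0 < log x / log N := div_pos (hL.trans_le hLu) hL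
  have hratio : (log x / log N) ^ m ≤ (x / N) ^ (1 / 2 : ℝ) := by
    rw [rpow_def_of_pos hu, rpow_def_of_pos (div_pos (hN0.trans_le hx) hN0),
      log_div (by linarith) hN0.ne']
    refine exp_le_exp.2 ?_
    calc log (log x / log N) * m ≤ (log x / log N - 1) * m :=
          mul_le_mul_of_nonneg_right (log_le_sub_one_of_pos hu) hm
      _ = (log x - log N) * (m / log N) := by field_simp
      _ ≤ (log x - log N) * (1 / 2) :=
          mul_le_mul_of_nonneg_left (by rw [div_le_iff₀ hL]; linarith) (by linarith)
  calc log x ^ m = log N ^ m * (log x / log N) ^ m := by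
        rw [← mul_rpow hL.le hu.le, mul_div_cancel₀ _ hL.ne']
    _ ≤ log N ^ m * (x / N) ^ (1 / 2 : ℝ) := by gcongr

lemma seriesTerm_nonneg {m l r s n x : ℝ} (hn : 0 ≤ n) (hx : 1 ≤ x) :
    0 ≤ seriesTerm m l r s n x := by
  have := log_nonneg hx
  unfold seriesTerm
  positivity

lemma seriesTerm_le_of_le {m l r s N x : ℝ} (hm : 0 ≤ m) (hl : 0 ≤ l) (hs : 0 ≤ s)
    (hx : 1 ≤ x) (hxN : x ≤ N) :
    seriesTerm m l r s (N ^ r) x ≤ N ^ (s - r * l) * log N ^ m := by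
  have hN0 : 0 < N := by linarith
  have hlog := log_nonneg hx
  have hlogN := log_nonneg (hx.trans hxN)
  rw [rpow_sub hN0, rpow_mul hN0.le]
  calc seriesTerm m l r s (N ^ r) x ≤ N ^ s * log N ^ m / (N ^ r) ^ l := by
        unfold seriesTerm
        have hxr : N ^ r ≤ x ^ r + N ^ r := le_add_of_nonneg_left (by positivity)
        gcongr
    _ = N ^ s / (N ^ r) ^ l * log N ^ m := by ring

lemma seriesTerm_le_of_ge {m l r s N x : ℝ} (hm : 0 ≤ m) (hl : 0 ≤ l) (hN : 1 < N)
    (hmN : 2 * m ≤ log N) (hx : N ≤ x) :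
    seriesTerm m l r s (N ^ r) x ≤ log N ^ m / N ^ (1 / 2 : ℝ) * x ^ (s + 1 / 2 - r * l) := by
  have hN0 : 0 < N := by linarith
  have hx0 : 0 < x := by linarith
  have hlogN := log_nonneg hN.le
  rw [rpow_sub hx0, rpow_add hx0, rpow_mul hx0.le]
  calc seriesTerm m l r s (N ^ r) x
      ≤ x ^ s * (log N ^ m * (x / N) ^ (1 / 2 : ℝ)) / (x ^ r) ^ l := by
        unfold seriesTerm
        have hNr : x ^ r ≤ x ^ r + N ^ r := le_add_of_nonneg_right (by positivity)
        gcongr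
        exact log_rpow_le_of_two_mul_le_log hm hN hmN hx
    _ = log N ^ m / N ^ (1 / 2 : ℝ) * (x ^ s * x ^ (1 / 2 : ℝ) / (x ^ r) ^ l) := by
        rw [div_rpow hx0.le hN0.le]; ring

lemma sum_range_seriesTerm_floor_le {m l r s N : ℝ} (hm : 0 ≤ m) (hl : 0 ≤ l) (hs : 0 ≤ s)
    (hN : 1 ≤ N) :
    ∑ i ∈ range ⌊N⌋₊, seriesTerm m l r s (N ^ r) ((i : ℝ) + 1)
      ≤ N ^ (1 + s - r * l) * log N ^ m := by
  have hN0 : 0 < N := by linarith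
  have hlogN := log_nonneg hN
  have hterm : ∀ i ∈ range ⌊N⌋₊,
      seriesTerm m l r s (N ^ r) ((i : ℝ) + 1) ≤ N ^ (s - r * l) * log N ^ m := by
    intro i hi
    have hiN : (i : ℝ) + 1 ≤ ⌊N⌋₊ := by exact_mod_cast mem_range.1 hi
    exact seriesTerm_le_of_le hm hl hs (by simp) (hiN.trans (Nat.floor_le hN0.le))
  calc _ ≤ ⌊N⌋₊ * (N ^ (s - r * l) * log N ^ m) := by
        simpa using sum_le_card_nsmul _ _ _ hterm
    _ ≤ N * (N ^ (s - r * l) * log N ^ m) := by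
        gcongr
        exact Nat.floor_le hN0.le
    _ = N ^ (1 + s - r * l) * log N ^ m := by
        rw [add_sub_assoc, rpow_add hN0, rpow_one, mul_assoc]

lemma sum_range_seriesTerm_floor_add_le {m l r s N : ℝ} (hm : 0 ≤ m) (hl : 0 ≤ l) (hN : 1 < N)
    (hmN : 2 * m ≤ log N) (hsl : s + 2 ≤ r * l) (M : ℕ) :
    ∑ i ∈ range M, seriesTerm m l r s (N ^ r) (((⌊N⌋₊ + i : ℕ) : ℝ) + 1)
      ≤ 3 * N ^ (1 + s - r * l) * log N ^ m := by
  have hN0 : 0 < N := by linarith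
  have hlogN := log_nonneg hN.le
  set c := r * l - s - 1 / 2 with hc
  have hc1 : 1 < c := by linarith
  have hK : N ≤ (⌊N⌋₊ : ℝ) + 1 := (Nat.lt_floor_add_one N).le
  have hNc : N ^ (-c) ≤ N ^ (1 - c) := rpow_le_rpow_of_exponent_le hN.le (by linarith)
  have hNc' : N ^ (1 - c) / (c - 1) ≤ 2 * N ^ (1 - c) := by
    rw [div_le_iff₀ (by linarith)]
    nlinarith [rpow_nonneg hN0.le (1 - c)]
  calc ∑ i ∈ range M, seriesTerm m l r s (N ^ r) (((⌊N⌋₊ + i : ℕ) : ℝ) + 1)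
      ≤ ∑ i ∈ range M, log N ^ m / N ^ (1 / 2 : ℝ) * (((⌊N⌋₊ : ℝ) + 1) + i) ^ (-c) := by
        gcongr with i
        rw [show ((⌊N⌋₊ + i : ℕ) : ℝ) + 1 = ((⌊N⌋₊ : ℝ) + 1) + i by push_cast; ring,
          show -c = s + 1 / 2 - r * l by rw [hc]; ring]
        exact seriesTerm_le_of_ge hm hl hN hmN (hK.trans (le_add_of_nonneg_right i.cast_nonneg))
    _ = log N ^ m / N ^ (1 / 2 : ℝ) * ∑ i ∈ range M, (((⌊N⌋₊ : ℝ) + 1) + i) ^ (-c) :=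
        (mul_sum _ _ _).symm
    _ ≤ log N ^ m / N ^ (1 / 2 : ℝ) * (N ^ (-c) + N ^ (1 - c) / (c - 1)) := by
        refine mul_le_mul_of_nonneg_left ((sum_range_rpow_neg_le hc1 (by positivity) M).trans ?_)
          (by positivity)
        exact add_le_add (rpow_le_rpow_of_nonpos hN0 hK (by linarith))
          (div_le_div_of_nonneg_right (rpow_le_rpow_of_nonpos hN0 hK (by linarith)) (by linarith))
    _ ≤ log N ^ m / N ^ (1 / 2 : ℝ) * (3 * N ^ (1 - c)) :=
        mul_le_mul_of_nonneg_left (by linarith) (by positivity)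
    _ = 3 * N ^ (1 + s - r * l) * log N ^ m := by
        rw [show 1 + s - r * l = 1 - c - 1 / 2 by rw [hc]; ring, rpow_sub hN0 (1 - c)]
        ring

theorem tsum_seriesTerm_le {m l r s N : ℝ} (hm : 0 ≤ m) (hl : 0 ≤ l) (hs : 0 ≤ s) (hN : 1 < N)
    (hmN : 2 * m ≤ log N) (hsl : s + 2 ≤ r * l) :
    ∑' i : ℕ, seriesTerm m l r s (N ^ r) ((i : ℝ) + 1) ≤ 4 * N ^ (1 + s - r * l) * log N ^ m := by
  have hterm_nonneg (i : ℕ) : 0 ≤ seriesTerm m l r s (N ^ r) ((i : ℝ) + 1) :=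
    seriesTerm_nonneg (by positivity) (by simp)
  refine Real.tsum_le_of_sum_range_le hterm_nonneg fun M => ?_
  calc ∑ i ∈ range M, seriesTerm m l r s (N ^ r) ((i : ℝ) + 1)
      ≤ ∑ i ∈ range (⌊N⌋₊ + M), seriesTerm m l r s (N ^ r) ((i : ℝ) + 1) :=
        sum_le_sum_of_subset_of_nonneg (range_subset_range.2 (by omega))
          fun i _ _ => hterm_nonneg i
    _ = ∑ i ∈ range ⌊N⌋₊, seriesTerm m l r s (N ^ r) ((i : ℝ) + 1)
          + ∑ i ∈ range M, seriesTerm m l r s (N ^ r) (((⌊N⌋₊ + i : ℕ) : ℝ) + 1) :=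
        sum_range_add _ _ _
    _ ≤ N ^ (1 + s - r * l) * log N ^ m + 3 * N ^ (1 + s - r * l) * log N ^ m :=
        add_le_add (sum_range_seriesTerm_floor_le hm hl hs hN.le)
          (sum_range_seriesTerm_floor_add_le hm hl hN hmN hsl M)
    _ = 4 * N ^ (1 + s - r * l) * log N ^ m := by ring

theorem stmt_2_general (m l r₀ r s n : ℝ) (hm : 0 < m) (hl : 1 ≤ l)
    (hr : 0 < r) (hrr₀ : r ≤ r₀) (hs : 0 < s) (hs2 : s ≤ r * l - 2)
    (hn : Real.exp (2 * m * r₀) ≤ n) :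
    ∑' i : ℕ, ((i : ℝ) + 1) ^ s * Real.log ((i : ℝ) + 1) ^ m / ((((i : ℝ) + 1) ^ r + n) ^ l)
      ≤ 4 * n ^ ((1 + s - l * r) / r) * Real.log n ^ m / r ^ m := by
  have hn0 : 0 < n := (exp_pos _).trans_le hn
  have hlogn : 2 * m * r ≤ log n :=
    (le_log_iff_exp_le hn0).2 ((exp_le_exp.2 (by nlinarith)).trans hn)
  set N := n ^ r⁻¹
  have hNr : N ^ r = n := rpow_inv_rpow hn0.le hr.ne'
  have hlogN : log N = log n / r := by rw [log_rpow hn0, inv_mul_eq_div]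
  have hmN : 2 * m ≤ log N := by rw [hlogN, le_div_iff₀ hr]; linarith
  have hN : 1 < N := (log_pos_iff (by positivity)).1 (by linarith)
  have key := tsum_seriesTerm_le (l := l) (r := r) hm.le (by linarith) hs.le hN hmN (by linarith)
  rw [hNr] at key
  calc _ = ∑' i : ℕ, seriesTerm m l r s n ((i : ℝ) + 1) := rfl
    _ ≤ 4 * N ^ (1 + s - r * l) * log N ^ m := key
    _ = 4 * n ^ ((1 + s - l * r) / r) * log n ^ m / r ^ m := by
        rw [hlogN, div_rpow ((by positivity : 0 ≤ 2 * m * r).trans hlogn) hr.le,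
          ← rpow_mul hn0.le, inv_mul_eq_div, mul_comm r l]
        ring

/-- Lemma 9.2 (case m > 0): for m > 0, l ≥ 1, r₀ > 0, r ∈ (0, r₀], s ∈ (0, rl − 2],
and n ≥ e^{2 m r₀},
∑_{i=1}^∞ i^s (log i)^m / (i^r + n)^l ≤ 4 n^{(1+s−lr)/r} (log n)^m / r^m. -/
theorem stmt_2 (m l r₀ r s n : ℝ) (hm : 0 < m) (hl : 1 ≤ l) (hr₀ : 0 < r₀)
    (hr : 0 < r) (hrr₀ : r ≤ r₀) (hs : 0 < s) (hs2 : s ≤ r * l - 2)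
    (hn : Real.exp (2 * m * r₀) ≤ n) :
    ∑' i : ℕ, ((i : ℝ) + 1) ^ s * Real.log ((i : ℝ) + 1) ^ m / ((((i : ℝ) + 1) ^ r + n) ^ l)
      ≤ 4 * n ^ ((1 + s - l * r) / r) * Real.log n ^ m / r ^ m :=
  stmt_2_general m l r₀ r s n hm hl hr hrr₀ hs hs2 hn
end

section
/- Let m, r, and i be positive reals (i ≥ 1). Then for every n ≥ e^m, we have n · i^r · (r log i)^m / (i^r + n)² ≤ (log n)^m. -/
/-- Lemma 9.4 (first inequality): for positive reals m, r and i ≥ 1, and n ≥ e^m,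
n i^r (r log i)^m / (i^r + n)² ≤ (log n)^m. -/
theorem stmt_5 (m r i n : ℝ) (hm : 0 < m) (hr : 0 < r) (hi : 1 ≤ i)
    (hn : Real.exp m ≤ n) :
    n * i ^ r * (r * Real.log i) ^ m / (i ^ r + n) ^ 2 ≤ Real.log n ^ m := by
  have hipos : (0:ℝ) < i := lt_of_lt_of_le one_pos hi
  have hx1 : 1 ≤ i ^ r := Real.one_le_rpow hi hr.le
  have hx0 : (0:ℝ) < i ^ r := lt_of_lt_of_le one_pos hx1
  set x := i ^ r with hxdef
  have hlogx : Real.log x = r * Real.log i := Real.log_rpow hipos r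
  have hn0 : 0 < n := lt_of_lt_of_le (Real.exp_pos m) hn
  have hv : m ≤ Real.log n := (Real.le_log_iff_exp_le hn0).mpr hn
  have hv0 : 0 < Real.log n := lt_of_lt_of_le hm hv
  have hsq : (0:ℝ) < (x + n) ^ 2 := by positivity
  rw [← hlogx, div_le_iff₀ hsq]
  rcases le_total x n with hcase | hcase
  · have h1 : Real.log x ^ m ≤ Real.log n ^ m :=
      Real.rpow_le_rpow (Real.log_nonneg hx1) (Real.log_le_log hx0 hcase) hm.le
    have hp : (0:ℝ) ≤ Real.log x ^ m := Real.rpow_nonneg (Real.log_nonneg hx1) m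
    nlinarith [sq_nonneg (x - n), sq_nonneg x, sq_nonneg n, mul_pos hx0 hn0]
  · -- n ≤ x
    have hu : Real.log n ≤ Real.log x := Real.log_le_log hn0 hcase
    have hu0 : 0 < Real.log x := lt_of_lt_of_le hv0 hu
    set u := Real.log x with hudef
    set v := Real.log n with hvdef
    have hratio : (u / v) ^ m ≤ x / n := by
      have hdivpos : 0 < u / v := div_pos hu0 hv0
      rw [Real.rpow_def_of_pos hdivpos]
      have hlog : Real.log (u / v) ≤ u / v - 1 := Real.log_le_sub_one_of_pos hdivpos
      have hstep : Real.log (u / v) * m ≤ u - v := by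
        have h1 : Real.log (u / v) * m ≤ (u / v - 1) * m := by nlinarith
        have h2 : (u / v - 1) * m ≤ u - v := by
          rw [div_sub_one hv0.ne', div_mul_eq_mul_div, div_le_iff₀ hv0]
          nlinarith
        linarith
      calc Real.exp (Real.log (u / v) * m) ≤ Real.exp (u - v) := Real.exp_le_exp.mpr hstep
        _ = x / n := by
          rw [Real.exp_sub, hudef, hvdef, Real.exp_log hx0, Real.exp_log hn0]
    have hkey : u ^ m * n ≤ v ^ m * x := by
      have := Real.div_rpow hu0.le hv0.le m ▸ hratio
      rw [Real.div_rpow hu0.le hv0.le, div_le_div_iff₀ (Real.rpow_pos_of_pos hv0 m) hn0] at hratio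
      linarith
    have hp : (0:ℝ) ≤ v ^ m := (Real.rpow_pos_of_pos hv0 m).le
    nlinarith [mul_le_mul_of_nonneg_left hkey hx0.le, mul_pos hx0 hn0, sq_nonneg n]
end

section
/- Let m, r, ξ, and i be positive reals (i ≥ 1). Then for every n ≥ e^m, we have n^ξ · (r log i)^{ξ m} / (i^r + n)^ξ ≤ (log n)^{ξ m}. -/
/-!
Write `a = log n ≥ m` and `b = r log i ≥ 0`, so that `i ^ r = e ^ b`. Taking `ξ`-th roots, the
claim becomes `n b ^ m ≤ a ^ m (e ^ b + n)`. This is clear when `b ≤ a`; when `a < b` it follows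
from `n = e ^ a` and the fact that `x ↦ x ^ m e ^ (-x)` decreases on `[m, ∞)`.
-/

open Real

lemma rpow_mul_exp_le_rpow_mul_exp {m a b : ℝ} (hm : 0 ≤ m) (ha : 0 < a) (hma : m ≤ a)
    (hab : a ≤ b) : b ^ m * exp a ≤ a ^ m * exp b := by
  have hb : 0 < b := ha.trans_le hab
  have hlog : m * (log b - log a) ≤ b - a :=
    calc m * (log b - log a) = m * log (b / a) := by rw [log_div hb.ne' ha.ne']
      _ ≤ m * (b / a - 1) := mul_le_mul_of_nonneg_left (log_le_sub_one_of_pos (by positivity)) hm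
      _ = m / a * (b - a) := by field_simp
      _ ≤ 1 * (b - a) := mul_le_mul_of_nonneg_right ((div_le_one ha).mpr hma) (by linarith)
      _ = b - a := one_mul _
  rw [rpow_def_of_pos hb, rpow_def_of_pos ha, ← exp_add, ← exp_add, exp_le_exp]
  linarith

lemma mul_rpow_le_log_rpow_mul_exp_add {m b n : ℝ} (hm : 0 < m) (hb : 0 ≤ b)
    (hn : exp m ≤ n) : n * b ^ m ≤ log n ^ m * (exp b + n) := by
  have hn0 : 0 < n := (exp_pos m).trans_le hn
  have hmn : m ≤ log n := (le_log_iff_exp_le hn0).mpr hn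
  have hlogn : 0 < log n := hm.trans_le hmn
  rcases le_or_gt b (log n) with hbn | hnb
  · calc n * b ^ m ≤ (exp b + n) * log n ^ m := by
          gcongr
          linarith [exp_pos b]
      _ = log n ^ m * (exp b + n) := mul_comm _ _
  · calc n * b ^ m = b ^ m * exp (log n) := by rw [exp_log hn0, mul_comm]
      _ ≤ log n ^ m * exp b := rpow_mul_exp_le_rpow_mul_exp hm.le hlogn hmn hnb.le
      _ ≤ log n ^ m * (exp b + n) := by gcongr; linarith

/-- Lemma 9.4 (second inequality): for positive reals m, r, ξ and i ≥ 1, and n ≥ e^m,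
n^ξ (r log i)^{ξ m} / (i^r + n)^ξ ≤ (log n)^{ξ m}. -/
theorem stmt_6 (m r ξ i n : ℝ) (hm : 0 < m) (hr : 0 < r) (hξ : 0 < ξ) (hi : 1 ≤ i)
    (hn : Real.exp m ≤ n) :
    n ^ ξ * (r * Real.log i) ^ (ξ * m) / (i ^ r + n) ^ ξ ≤ Real.log n ^ (ξ * m) := by
  have hn0 : 0 < n := (exp_pos m).trans_le hn
  have hlogn : 0 ≤ log n := (hm.trans_le ((le_log_iff_exp_le hn0).mpr hn)).le
  set b := r * log i
  have hb : 0 ≤ b := mul_nonneg hr.le (log_nonneg hi)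
  have hir : i ^ r = exp b := by
    rw [rpow_def_of_pos (zero_lt_one.trans_le hi), mul_comm]
  rw [hir, mul_comm ξ m, rpow_mul hb, rpow_mul hlogn, ← mul_rpow hn0.le (by positivity),
    div_le_iff₀ (by positivity), ← mul_rpow (by positivity) (by positivity)]
  exact rpow_le_rpow (by positivity) (mul_rpow_le_log_rpow_mul_exp_add hm hb hn) hξ.le
end

section
/- Fix β > 0, R > 0, p ≥ 0, and l > 0. With h_n as above for a sequence μ with ‖μ‖_β ≤ R, there exists a constant c₀ > 0 depending only on l, β, R, p such that for all sufficiently large n, h_n(α) ≤ l for every α ∈ (0, β − c₀/log n]. -/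
/-!
With `x = i + 1`, `s = 1 + 2α + 2p` and `e = 1 + 2α - 2β`, the `i`-th summand is
`x ^ (2β) μᵢ² · x ^ e log x · n² / (x ^ s + n)²`. Below the transition point `x = n ^ (1/s)`
the last factor is at most `1` and `log x ≤ log n / s`; above it, the factor is at most
`n / x ^ s` and `x ^ (e - s) log x` decays because `e - s ≤ -2β`. So the kernel is at most
`max (n ^ (e/s)) 1 · (log n / s + 1/(2β))`, and then `h_n(α) ≤ 2R² max (n ^ ((e-1)/s)) (n ^ (-1/s))`
as soon as `log n ≥ s/(2β)`. Both powers are at most `exp (-τ)` when `c₀ = (1 + 2β + 2p) τ`,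
`log n ≥ c₀` and `α ≤ β - c₀ / log n`, and `τ = 1 + 2R²/l` makes `2R² exp (-τ) ≤ l`.
-/

open Real

lemma rpow_mul_log_le_one_div {u a e : ℝ} (hu : 1 ≤ u) (ha : 0 < a) (he : e ≤ -a) :
    u ^ e * log u ≤ 1 / a := by
  have hu0 : 0 < u := by linarith
  calc u ^ e * log u ≤ u ^ e * (u ^ a / a) :=
        mul_le_mul_of_nonneg_left (log_le_rpow_div hu0.le ha) (rpow_nonneg hu0.le _)
    _ = u ^ (e + a) / a := by rw [rpow_add hu0]; ring
    _ ≤ 1 / a := by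
        gcongr
        exact rpow_le_one_of_one_le_of_nonpos hu (by linarith)

lemma rpow_mul_log_le_of_le {Q x a e : ℝ} (hQ : 1 ≤ Q) (hQx : Q ≤ x) (ha : 0 < a)
    (he : e ≤ -a) : x ^ e * log x ≤ Q ^ e * (log Q + 1 / a) := by
  have hQ0 : 0 < Q := by linarith
  set u := x / Q
  have hu : 1 ≤ u := (one_le_div hQ0).2 hQx
  have hxu : x = Q * u := by simp only [u]; field_simp
  have hue : u ^ e ≤ 1 := rpow_le_one_of_one_le_of_nonpos hu (by linarith)
  have hlogQ : 0 ≤ log Q := log_nonneg hQ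
  rw [hxu, mul_rpow hQ0.le (by linarith), log_mul hQ0.ne' (by positivity), mul_assoc]
  gcongr
  rw [mul_add]
  linarith [rpow_mul_log_le_one_div hu ha he, mul_le_of_le_one_left hlogQ hue]

lemma sq_div_sq_add_le_one {y n : ℝ} (hy : 0 ≤ y) (hn : 0 ≤ n) : n ^ 2 / (y + n) ^ 2 ≤ 1 :=
  div_le_one_of_le₀ (by gcongr; linarith) (sq_nonneg _)

lemma sq_div_sq_add_le_div {y n : ℝ} (hy : 0 < y) (hn : 0 ≤ n) : n ^ 2 / (y + n) ^ 2 ≤ n / y := by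
  rw [div_le_div_iff₀ (by positivity) hy, sq, mul_assoc]
  exact mul_le_mul_of_nonneg_left (by nlinarith) hn

lemma kernel_le_of_rpow_le {x n s e : ℝ} (hx : 1 ≤ x) (hs : 0 < s) (hxn : x ^ s ≤ n) :
    x ^ e * log x * (n ^ 2 / (x ^ s + n) ^ 2) ≤ max (n ^ (e / s)) 1 * (log n / s) := by
  have hx0 : 0 < x := by linarith
  have hxs : 0 < x ^ s := rpow_pos_of_pos hx0 s
  have hpow : x ^ e ≤ max (n ^ (e / s)) 1 := by
    rcases le_or_gt 0 e with he | he
    · calc x ^ e = (x ^ s) ^ (e / s) := by rw [← rpow_mul hx0.le, mul_div_cancel₀ _ hs.ne']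
        _ ≤ n ^ (e / s) := by gcongr
        _ ≤ _ := le_max_left _ _
    · exact (rpow_le_one_of_one_le_of_nonpos hx he.le).trans (le_max_right _ _)
  have hlog : log x ≤ log n / s := by
    rw [le_div_iff₀ hs, mul_comm, ← log_rpow hx0]
    exact log_le_log hxs hxn
  calc x ^ e * log x * (n ^ 2 / (x ^ s + n) ^ 2) ≤ x ^ e * log x * 1 := by
        gcongr
        · exact mul_nonneg (rpow_nonneg hx0.le _) (log_nonneg hx)
        · exact sq_div_sq_add_le_one hxs.le (hxs.le.trans hxn)
    _ ≤ max (n ^ (e / s)) 1 * (log n / s) := by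
        rw [mul_one]
        exact mul_le_mul hpow hlog (log_nonneg hx) (zero_le_one.trans (le_max_right _ _))

lemma kernel_le_of_lt_rpow {x n s a e : ℝ} (hx : 0 ≤ x) (hn : 1 ≤ n) (hs : 0 < s)
    (ha : 0 < a) (he : e + a ≤ s) (hnx : n < x ^ s) :
    x ^ e * log x * (n ^ 2 / (x ^ s + n) ^ 2) ≤ n ^ (e / s) * (log n / s + 1 / a) := by
  have hn0 : 0 < n := by linarith
  have hxs : 0 < x ^ s := hn0.trans hnx
  set Q := n ^ (1 / s)
  have hQ : 1 ≤ Q := one_le_rpow hn (by positivity)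
  have hQx : Q ≤ x := by
    calc Q ≤ (x ^ s) ^ (1 / s) := rpow_le_rpow hn0.le hnx.le (by positivity)
      _ = x := by rw [← rpow_mul hx, mul_one_div_cancel hs.ne', rpow_one]
  have hx0 : 0 < x := by linarith
  have hlogx : 0 ≤ log x := log_nonneg (hQ.trans hQx)
  have hnQ : n * Q ^ (e - s) = n ^ (e / s) := by
    rw [← rpow_mul hn0.le]
    nth_rw 1 [← rpow_one n]
    rw [← rpow_add hn0]
    congr 1
    field_simp
    ring
  calc x ^ e * log x * (n ^ 2 / (x ^ s + n) ^ 2) ≤ x ^ e * log x * (n / x ^ s) :=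
        mul_le_mul_of_nonneg_left (sq_div_sq_add_le_div hxs hn0.le)
          (mul_nonneg (rpow_nonneg hx _) hlogx)
    _ = n * (x ^ (e - s) * log x) := by rw [rpow_sub hx0]; ring
    _ ≤ n * (Q ^ (e - s) * (log Q + 1 / a)) :=
        mul_le_mul_of_nonneg_left (rpow_mul_log_le_of_le hQ hQx ha (by linarith)) hn0.le
    _ = n ^ (e / s) * (log n / s + 1 / a) := by
        rw [← mul_assoc, hnQ, log_rpow hn0]
        ring

lemma kernel_le {x n s a e : ℝ} (hx : 1 ≤ x) (hn : 1 ≤ n) (hs : 0 < s) (ha : 0 < a)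
    (he : e + a ≤ s) :
    x ^ e * log x * (n ^ 2 / (x ^ s + n) ^ 2) ≤ max (n ^ (e / s)) 1 * (log n / s + 1 / a) := by
  have hlog : 0 ≤ log n / s := div_nonneg (log_nonneg hn) hs.le
  rcases le_or_gt (x ^ s) n with hxn | hnx
  · refine (kernel_le_of_rpow_le hx hs hxn).trans ?_
    exact mul_le_mul_of_nonneg_left (le_add_of_nonneg_right (by positivity))
      (zero_le_one.trans (le_max_right _ _))
  · refine (kernel_le_of_lt_rpow (by linarith) hn hs ha he hnx).trans ?_
    exact mul_le_mul_of_nonneg_right (le_max_left _ _) (by positivity)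

lemma weighted_kernel_nonneg {x n m b s : ℝ} (hx : 1 ≤ x) :
    0 ≤ n ^ 2 * x ^ b * m ^ 2 * log x / (x ^ s + n) ^ 2 := by
  have hx0 : 0 ≤ x := by linarith
  exact div_nonneg (mul_nonneg (by positivity) (log_nonneg hx)) (sq_nonneg _)

lemma weighted_kernel_le {x n m s a b e : ℝ} (hx : 1 ≤ x) (hn : 1 ≤ n) (hs : 0 < s)
    (ha : 0 < a) (he : e + a ≤ s) :
    n ^ 2 * x ^ (b + e) * m ^ 2 * log x / (x ^ s + n) ^ 2 ≤
      x ^ b * m ^ 2 * (max (n ^ (e / s)) 1 * (log n / s + 1 / a)) := by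
  have hx0 : 0 < x := by linarith
  calc n ^ 2 * x ^ (b + e) * m ^ 2 * log x / (x ^ s + n) ^ 2
      = x ^ b * m ^ 2 * (x ^ e * log x * (n ^ 2 / (x ^ s + n) ^ 2)) := by
        rw [rpow_add hx0]; ring
    _ ≤ _ := mul_le_mul_of_nonneg_left (kernel_le hx hn hs ha he) (by positivity)

lemma tsum_le_mul_of_le_mul {ι : Type*} {f w : ι → ℝ} {B C : ℝ} (hw : Summable w)
    (hwB : ∑' i, w i ≤ B) (hC : 0 ≤ C) (hf0 : ∀ i, 0 ≤ f i) (hf : ∀ i, f i ≤ w i * C) :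
    ∑' i, f i ≤ B * C :=
  calc ∑' i, f i ≤ ∑' i, w i * C :=
        Summable.tsum_le_tsum hf ((hw.mul_right C).of_nonneg_of_le hf0 hf) (hw.mul_right C)
    _ = (∑' i, w i) * C := tsum_mul_right
    _ ≤ B * C := mul_le_mul_of_nonneg_right hwB hC

lemma tsum_weighted_kernel_le {μ : ℕ → ℝ} {n R s a b e : ℝ}
    (hsum : Summable (fun i : ℕ => ((i : ℝ) + 1) ^ b * (μ (i + 1)) ^ 2))
    (hμ : ∑' i : ℕ, ((i : ℝ) + 1) ^ b * (μ (i + 1)) ^ 2 ≤ R ^ 2)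
    (hn : 1 ≤ n) (hs : 0 < s) (ha : 0 < a) (he : e + a ≤ s) :
    ∑' i : ℕ, n ^ 2 * ((i : ℝ) + 1) ^ (b + e) * (μ (i + 1)) ^ 2 * log ((i : ℝ) + 1) /
        (((i : ℝ) + 1) ^ s + n) ^ 2 ≤
      R ^ 2 * (max (n ^ (e / s)) 1 * (log n / s + 1 / a)) := by
  have hx : ∀ i : ℕ, (1 : ℝ) ≤ i + 1 := fun i => le_add_of_nonneg_left i.cast_nonneg
  have hlog : 0 ≤ log n / s := div_nonneg (log_nonneg hn) hs.le
  exact tsum_le_mul_of_le_mul hsum hμ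
    (mul_nonneg (zero_le_one.trans (le_max_right _ _)) (by positivity))
    (fun i => weighted_kernel_nonneg (hx i)) (fun i => weighted_kernel_le (hx i) hn hs ha he)

lemma max_rpow_le_exp_neg_mul_rpow {n s e τ : ℝ} (hn : 0 < n) (hs : 0 < s)
    (he : (e - 1) * log n ≤ -(τ * s)) (hτ : τ * s ≤ log n) :
    max (n ^ (e / s)) 1 ≤ exp (-τ) * n ^ (1 / s) := by
  have hsplit : ∀ y, n ^ y = n ^ (y - 1 / s) * n ^ (1 / s) := fun y => by
    rw [← rpow_add hn, sub_add_cancel]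
  have hpow_le : ∀ y, (y * s - 1) * log n ≤ -(τ * s) → n ^ y ≤ exp (-τ) * n ^ (1 / s) := by
    intro y hy
    rw [hsplit y, rpow_def_of_pos hn]
    gcongr
    have hexp : log n * (y - 1 / s) = (y * s - 1) * log n / s := by field_simp
    rw [hexp, div_le_iff₀ hs]
    linarith
  apply max_le (hpow_le _ ?_) (by simpa using hpow_le 0 (by linarith))
  rwa [div_mul_cancel₀ _ hs.ne']

lemma div_mul_le_of_le_mul {Q L s K A B T δ l : ℝ} (hQ : 0 < Q) (hL : 0 < L) (hs : 0 < s)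
    (hsK : s * K ≤ L) (hA0 : 0 ≤ A) (hA : A ≤ δ * Q) (hB : 0 ≤ B)
    (hT : T ≤ B * (A * (L / s + K))) (hδ : 2 * B * δ ≤ l) :
    s / (Q * L) * T ≤ l := by
  rw [div_mul_eq_mul_div, div_le_iff₀ (mul_pos hQ hL)]
  calc s * T ≤ s * (B * (A * (L / s + K))) := by gcongr
    _ = B * A * (L + s * K) := by field_simp
    _ ≤ B * A * (2 * L) := by gcongr; linarith
    _ ≤ B * (δ * Q) * (2 * L) := by gcongr
    _ = 2 * B * δ * (Q * L) := by ring
    _ ≤ l * (Q * L) := by gcongr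

lemma mul_exp_neg_one_add_div_le {B l : ℝ} (hl : 0 < l) : B * exp (-(1 + B / l)) ≤ l := by
  rw [exp_neg, ← div_eq_mul_inv, div_le_iff₀ (exp_pos _)]
  have hexp := add_one_le_exp (1 + B / l)
  have hBl : l * (B / l) = B := mul_div_cancel₀ B hl.ne'
  nlinarith

theorem stmt_8_general (β R p l : ℝ) (hβ : 0 < β) (hp : 0 ≤ p) (hl : 0 < l) :
    ∃ c₀ > 0, ∃ N : ℝ, ∀ (μ : ℕ → ℝ),
      Summable (fun i : ℕ => ((i : ℝ) + 1) ^ (2 * β) * (μ (i + 1)) ^ 2) →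
      (∑' i : ℕ, ((i : ℝ) + 1) ^ (2 * β) * (μ (i + 1)) ^ 2) ≤ R ^ 2 →
      ∀ n ≥ N, ∀ α : ℝ, 0 < α → α ≤ β - c₀ / Real.log n →
        (1 + 2 * α + 2 * p) / (n ^ (1 / (1 + 2 * α + 2 * p)) * Real.log n) *
          ∑' i : ℕ, n ^ 2 * ((i : ℝ) + 1) ^ (1 + 2 * α) * (μ (i + 1)) ^ 2 *
            Real.log ((i : ℝ) + 1) / ((((i : ℝ) + 1) ^ (1 + 2 * α + 2 * p) + n) ^ 2)
        ≤ l := by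
  set sb := 1 + 2 * β + 2 * p
  set τ := 1 + 2 * R ^ 2 / l
  refine ⟨sb * τ, by positivity, exp (sb * (1 / (2 * β)) + sb * τ), ?_⟩
  intro μ hsum hμ n hn α hα hαβ
  have hn0 : 0 < n := (exp_pos _).trans_le hn
  have hL : sb * (1 / (2 * β)) + sb * τ ≤ log n := (le_log_iff_exp_le hn0).2 hn
  have hsbK : 0 < sb * (1 / (2 * β)) := by positivity
  have hsbτ : 0 < sb * τ := by positivity
  have hL0 : 0 < log n := by linarith
  have hαL : (α - β) * log n ≤ -(sb * τ) := by
    rw [le_sub_comm, div_le_iff₀ hL0] at hαβ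
    linarith
  have hsb : 1 + 2 * α + 2 * p ≤ sb := by nlinarith
  have hτs := mul_le_mul_of_nonneg_right hsb (by positivity : 0 ≤ τ)
  have hKs := mul_le_mul_of_nonneg_right hsb (by positivity : 0 ≤ 1 / (2 * β))
  have hA := max_rpow_le_exp_neg_mul_rpow (e := 1 + 2 * α - 2 * β) (τ := τ) hn0
    (s := 1 + 2 * α + 2 * p) (by positivity) (by linarith) (by linarith)
  have hT := tsum_weighted_kernel_le (b := 2 * β) (e := 1 + 2 * α - 2 * β) hsum hμ
    ((one_le_exp (by positivity)).trans hn) (s := 1 + 2 * α + 2 * p) (by positivity)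
    (a := 2 * β) (by positivity) (by linarith)
  rw [add_sub_cancel] at hT
  exact div_mul_le_of_le_mul (rpow_pos_of_pos hn0 _) hL0 (by positivity) (by linarith)
    (by positivity) hA (sq_nonneg R) hT (mul_exp_neg_one_add_div_le hl)

/-- Lemma 2.1(i): for μ in a Sobolev ball, there is c₀ > 0 (depending only on
l, β, R, p) such that for all large n, h_n(α) ≤ l whenever 0 < α ≤ β − c₀/log n. -/
theorem stmt_8 (β R p l : ℝ) (hβ : 0 < β) (hR : 0 < R) (hp : 0 ≤ p) (hl : 0 < l) :
    ∃ c₀ > 0, ∃ N : ℝ, ∀ (μ : ℕ → ℝ),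
      Summable (fun i : ℕ => ((i : ℝ) + 1) ^ (2 * β) * (μ (i + 1)) ^ 2) →
      (∑' i : ℕ, ((i : ℝ) + 1) ^ (2 * β) * (μ (i + 1)) ^ 2) ≤ R ^ 2 →
      ∀ n ≥ N, ∀ α : ℝ, 0 < α → α ≤ β - c₀ / Real.log n →
        (1 + 2 * α + 2 * p) / (n ^ (1 / (1 + 2 * α + 2 * p)) * Real.log n) *
          ∑' i : ℕ, n ^ 2 * ((i : ℝ) + 1) ^ (1 + 2 * α) * (μ (i + 1)) ^ 2 *
            Real.log ((i : ℝ) + 1) / ((((i : ℝ) + 1) ^ (1 + 2 * α + 2 * p) + n) ^ 2)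
        ≤ l :=
  stmt_8_general β R p l hβ hp hl
end

section
/- Fix γ > 0, R > 0, p ≥ 0, and l > 0. Suppose the real sequence μ satisfies ∑_{i=1}^∞ e^{2γ i} μ_i² ≤ R². Then for h_n as defined below, there exists n₀ (depending only on R, γ, p, l) such that for all n ≥ n₀ and all α ∈ (0, √(log n)/log log n], h_n(α) ≤ l. -/
private lemma xlogx_mono {a b : ℝ} (ha : 1 ≤ a) (hab : a ≤ b) :
    a * Real.log a ≤ b * Real.log b := by
  have h0 : 0 ≤ Real.log a := Real.log_nonneg ha
  have h1 : Real.log a ≤ Real.log b := Real.log_le_log (by linarith) hab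
  nlinarith

private lemma core_ineq (γ R p l : ℝ) (hγ : 0 < γ) (hR : 0 < R) (hp : 0 ≤ p) (hl : 0 < l)
    (n α : ℝ) (h0n : 0 < n)
    (hL0 : 0 < Real.log n)
    (hlL : 21 + 9 * max 0 (-Real.log (2*γ)) ≤ Real.log (Real.log n))
    (hsQ8 : 8 + 8*p ≤ Real.sqrt (Real.sqrt (Real.log n)))
    (hQR : Real.log (R^2/l) ≤ Real.sqrt (Real.log n))
    (hα : 0 < α)
    (hαA : α ≤ Real.sqrt (Real.log n) / Real.log (Real.log n)) :
    (1 + 2*α + 2*p) / (n ^ (1/(1+2*α+2*p)) * Real.log n) *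
      (Real.exp ((2+2*α) * Real.log ((2+2*α)/(2*γ))) * R^2) ≤ l := by
  set c := max 0 (-Real.log (2*γ)) with hc
  set L := Real.log n with hLdef
  set Q := Real.sqrt L with hQdef
  set lL := Real.log L with hlLdef
  set A := Q / lL with hAdef
  set sQ := Real.sqrt Q with hsQdef
  set s := 1 + 2*α + 2*p with hsdef
  set β := 2 + 2*α with hβdef
  set B := 3 * A with hBdef
  have hc0 : 0 ≤ c := le_max_left _ _
  have hQ0 : 0 ≤ Q := Real.sqrt_nonneg L
  have hQ2 : Q^2 = L := Real.sq_sqrt hL0.le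
  have hsQ2 : sQ^2 = Q := Real.sq_sqrt hQ0
  have hsQ0 : 0 ≤ sQ := Real.sqrt_nonneg Q
  have hnrw : n ^ (1/s) = Real.exp (L / s) := by
    rw [Real.rpow_def_of_pos h0n, ← hLdef]; congr 1; field_simp
  clear_value c L Q lL A sQ s β B
  rw [hnrw]
  have hsQpos : 0 < sQ := by linarith
  have hQ64 : 64 ≤ Q := by nlinarith only [hsQ2, hsQ8, hp]
  have hQ3 : 3 ≤ Q := by linarith
  have hL1 : (1:ℝ) ≤ L := by nlinarith only [hQ2, hQ3, hQ0]
  have hlL1 : 1 ≤ lL := by linarith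
  have hlL0 : 0 < lL := by linarith
  have hA : A * lL = Q := by rw [hAdef]; exact div_mul_cancel₀ _ hlL0.ne'
  have hAQ : A ≤ Q := by rw [hAdef]; exact div_le_self hQ0 hlL1
  have hlogL4 : lL ≤ 4 * sQ := by
    have h1 : lL = 2 * Real.log Q := by rw [hlLdef, ← hQ2, Real.log_pow]; push_cast; ring
    have h2 : Real.log Q = 2 * Real.log sQ := by rw [← hsQ2, Real.log_pow]; push_cast; ring
    have h3 : Real.log sQ ≤ sQ - 1 := Real.log_le_sub_one_of_pos hsQpos
    linarith
  have hC2 : 2 + 2*p ≤ A := by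
    have h4 : Q / (4*sQ) = sQ / 4 := by rw [← hsQ2]; field_simp
    have h5 : Q / (4*sQ) ≤ A := by rw [hAdef]; gcongr
    linarith [h5, h4.symm.le, h4.le]
  have hαA' : α ≤ A := hαA
  have hs1 : (1:ℝ) ≤ s := by rw [hsdef]; linarith
  have hβ2 : (2:ℝ) ≤ β := by rw [hβdef]; linarith
  have hsB : s ≤ B := by rw [hsdef, hBdef]; linarith
  have hβB : β ≤ B := by rw [hβdef, hBdef]; linarith
  have hBpos : 0 < B := by linarith
  have hB3Q : B ≤ 3 * Q := by rw [hBdef]; linarith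
  have hBL : B ≤ L := by
    calc B ≤ 3 * Q := hB3Q
    _ ≤ Q * Q := mul_le_mul_of_nonneg_right hQ3 hQ0
    _ = Q ^ 2 := (pow_two Q).symm
    _ = L := hQ2
  have hKexp : β * Real.log (β/(2*γ)) ≤ 3*Q + 3*Q*c := by
    have hlogdiv : Real.log (β/(2*γ)) = Real.log β - Real.log (2*γ) :=
      Real.log_div (by linarith) (by positivity)
    have h1 : β * Real.log β ≤ B * Real.log B := xlogx_mono (by linarith) hβB
    have h2 : Real.log B ≤ lL := by rw [hlLdef]; exact Real.log_le_log hBpos hBL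
    have h2' : B * Real.log B ≤ B * lL := mul_le_mul_of_nonneg_left h2 hBpos.le
    have h3 : B * lL = 3 * Q := by rw [hBdef, mul_assoc, hA]
    have h4 : -Real.log (2*γ) ≤ c := by rw [hc]; exact le_max_right _ _
    have h5 : β * (-Real.log (2*γ)) ≤ β * c := mul_le_mul_of_nonneg_left h4 (by linarith)
    have h6 : β * c ≤ (3*Q) * c := mul_le_mul_of_nonneg_right (by linarith) hc0
    rw [hlogdiv]
    linarith only [h1, h2', h3.le, h3.ge, h5, h6]
  have hLBeq : L / B = Q * lL / 3 := by
    rw [hBdef, hAdef, ← hQ2]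
    field_simp
  have hLs : Q * lL / 3 ≤ L / s := by
    rw [← hLBeq]; gcongr
  have hsexp : s ≤ Real.exp (3*Q) := by
    have h9 := Real.add_one_le_exp (3*Q)
    linarith only [h9, hsB, hB3Q]
  have hden : Real.exp (Q*lL/3) ≤ Real.exp (L/s) * L := by
    calc Real.exp (Q*lL/3) = Real.exp (Q*lL/3) * 1 := by ring
    _ ≤ Real.exp (L/s) * L :=
        mul_le_mul (Real.exp_le_exp.2 hLs) hL1 (by norm_num) (Real.exp_pos _).le
  have hfrac : s / (Real.exp (L/s) * L) ≤ Real.exp (3*Q) / Real.exp (Q*lL/3) :=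
    div_le_div₀ (Real.exp_pos _).le hsexp (Real.exp_pos _) hden
  have hKle : Real.exp (β * Real.log (β/(2*γ))) ≤ Real.exp (3*Q + 3*Q*c) :=
    Real.exp_le_exp.2 hKexp
  have hexpbd : 6*Q + 3*Q*c - Q*lL/3 ≤ -Q := by
    have h8 : Q * (21 + 9*c) ≤ Q * lL := mul_le_mul_of_nonneg_left hlL hQ0
    linarith only [h8, hQ3, hc0]
  have hlast : Real.exp (-Q) * R^2 ≤ l := by
    rw [Real.exp_neg, inv_mul_le_iff₀ (Real.exp_pos _)]
    have h7 : R^2/l ≤ Real.exp Q := by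
      calc R^2/l = Real.exp (Real.log (R^2/l)) := (Real.exp_log (by positivity)).symm
      _ ≤ Real.exp Q := Real.exp_le_exp.2 hQR
    calc R^2 = (R^2/l) * l := by field_simp
    _ ≤ Real.exp Q * l := mul_le_mul_of_nonneg_right h7 hl.le
  calc s / (Real.exp (L/s) * L) * (Real.exp (β * Real.log (β/(2*γ))) * R^2)
      ≤ (Real.exp (3*Q) / Real.exp (Q*lL/3)) * (Real.exp (3*Q + 3*Q*c) * R^2) := by
        apply mul_le_mul hfrac (mul_le_mul_of_nonneg_right hKle (sq_nonneg R)) (by positivity) (by positivity)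
  _ = Real.exp (6*Q + 3*Q*c - Q*lL/3) * R^2 := by
        rw [← Real.exp_sub, ← mul_assoc, ← Real.exp_add]; ring_nf
  _ ≤ Real.exp (-Q) * R^2 := mul_le_mul_of_nonneg_right (Real.exp_le_exp.2 hexpbd) (sq_nonneg R)
  _ ≤ l := hlast

private lemma term_le (γ p : ℝ) (hγ : 0 < γ) (hp : 0 ≤ p) (n α m x : ℝ)
    (h0n : 0 < n) (hα : 0 < α) (hx1 : 1 ≤ x) :
    n ^ 2 * x ^ (1 + 2 * α) * m ^ 2 * Real.log x / ((x ^ (1 + 2 * α + 2 * p) + n) ^ 2)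
      ≤ Real.exp ((2 + 2*α) * Real.log ((2 + 2*α)/(2*γ))) * (Real.exp (2 * γ * x) * m ^ 2) := by
  have hx0 : (0:ℝ) < x := by linarith
  have hlogx0 : 0 ≤ Real.log x := Real.log_nonneg hx1
  have hlogx : Real.log x ≤ x := by
    have := Real.log_le_sub_one_of_pos hx0; linarith
  set D := (x ^ (1 + 2 * α + 2 * p) + n) ^ 2 with hD
  have hDpos : 0 < D := by positivity
  have hn2D : n^2 ≤ D := by
    rw [hD]
    have hxs : 0 ≤ x ^ (1 + 2 * α + 2 * p) := Real.rpow_nonneg hx0.le _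
    have : n ≤ x ^ (1 + 2 * α + 2 * p) + n := by linarith
    exact pow_le_pow_left₀ h0n.le this 2
  have key : n ^ 2 * x ^ (1 + 2 * α) * m ^ 2 * Real.log x / D
      = (x ^ (1 + 2 * α) * Real.log x * m ^ 2) * (n^2 / D) := by ring
  have hfrac : n^2 / D ≤ 1 := (div_le_one hDpos).2 hn2D
  have hb1 : n ^ 2 * x ^ (1 + 2 * α) * m ^ 2 * Real.log x / D
      ≤ x ^ (1 + 2 * α) * Real.log x * m ^ 2 := by
    rw [key]
    calc (x ^ (1 + 2 * α) * Real.log x * m ^ 2) * (n^2 / D)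
        ≤ (x ^ (1 + 2 * α) * Real.log x * m ^ 2) * 1 := by
          apply mul_le_mul_of_nonneg_left hfrac
          have := Real.rpow_nonneg hx0.le (1 + 2*α)
          positivity
    _ = x ^ (1 + 2 * α) * Real.log x * m ^ 2 := by ring
  have hb2 : x ^ (1 + 2 * α) * Real.log x ≤ x ^ (2 + 2*α) := by
    have hsplit : x ^ (2 + 2*α) = x ^ (1 + 2*α) * x := by
      rw [show (2 + 2*α) = (1 + 2*α) + 1 by ring, Real.rpow_add hx0, Real.rpow_one]
    rw [hsplit]
    exact mul_le_mul_of_nonneg_left hlogx (Real.rpow_nonneg hx0.le _)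
  have hb3 : x ^ (2 + 2*α) ≤ Real.exp ((2 + 2*α) * Real.log ((2 + 2*α)/(2*γ))) * Real.exp (2*γ*x) := by
    have hβpos : (0:ℝ) < 2 + 2*α := by linarith
    set t := 2*γ/(2+2*α) with ht
    have htpos : 0 < t := by positivity
    have hlog1 : Real.log (t*x) ≤ t*x - 1 := Real.log_le_sub_one_of_pos (by positivity)
    have hlogmul : Real.log (t*x) = Real.log t + Real.log x :=
      Real.log_mul (ne_of_gt htpos) (ne_of_gt hx0)
    have hlogt : Real.log ((2+2*α)/(2*γ)) = - Real.log t := by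
      rw [ht, ← Real.log_inv, inv_div]
    have htβ : t * (2+2*α) = 2*γ := by rw [ht]; field_simp
    have hkey : (2+2*α) * Real.log x ≤ (2+2*α) * Real.log ((2+2*α)/(2*γ)) + 2*γ*x := by
      have h1 : Real.log x ≤ t*x - 1 - Real.log t := by linarith
      have h2 := mul_le_mul_of_nonneg_left h1 hβpos.le
      have e : (2+2*α)*(t*x-1-Real.log t) = 2*γ*x - (2+2*α) - (2+2*α)*Real.log t := by
        rw [← htβ]; ring
      rw [hlogt]
      nlinarith [h2, e.le, e.ge, hβpos]
    rw [Real.rpow_def_of_pos hx0, ← Real.exp_add]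
    apply Real.exp_le_exp.2
    nlinarith [hkey]
  calc n ^ 2 * x ^ (1 + 2 * α) * m ^ 2 * Real.log x / D
      ≤ x ^ (1 + 2 * α) * Real.log x * m ^ 2 := hb1
  _ ≤ x ^ (2 + 2*α) * m ^ 2 := mul_le_mul_of_nonneg_right hb2 (sq_nonneg m)
  _ ≤ (Real.exp ((2 + 2*α) * Real.log ((2 + 2*α)/(2*γ))) * Real.exp (2*γ*x)) * m ^ 2 :=
      mul_le_mul_of_nonneg_right hb3 (sq_nonneg m)
  _ = Real.exp ((2 + 2*α) * Real.log ((2 + 2*α)/(2*γ))) * (Real.exp (2*γ*x) * m ^ 2) := by ring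



/-- Lemma 2.1(ii): for μ in an analytic ball, there is n₀ (depending only on
R, γ, p, l) such that for n ≥ n₀, h_n(α) ≤ l for all 0 < α ≤ √(log n)/log log n. -/
theorem stmt_9 (γ R p l : ℝ) (hγ : 0 < γ) (hR : 0 < R) (hp : 0 ≤ p) (hl : 0 < l) :
    ∃ n₀ : ℝ, ∀ (μ : ℕ → ℝ),
      Summable (fun i : ℕ => Real.exp (2 * γ * ((i : ℝ) + 1)) * (μ (i + 1)) ^ 2) →
      (∑' i : ℕ, Real.exp (2 * γ * ((i : ℝ) + 1)) * (μ (i + 1)) ^ 2) ≤ R ^ 2 →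
      ∀ n ≥ n₀, ∀ α : ℝ, 0 < α →
        α ≤ Real.sqrt (Real.log n) / Real.log (Real.log n) →
        (1 + 2 * α + 2 * p) / (n ^ (1 / (1 + 2 * α + 2 * p)) * Real.log n) *
          ∑' i : ℕ, n ^ 2 * ((i : ℝ) + 1) ^ (1 + 2 * α) * (μ (i + 1)) ^ 2 *
            Real.log ((i : ℝ) + 1) / ((((i : ℝ) + 1) ^ (1 + 2 * α + 2 * p) + n) ^ 2)
        ≤ l := by
  refine ⟨Real.exp (max (max (Real.exp (21 + 9 * max 0 (-Real.log (2*γ)))) ((8+8*p)^4))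
      ((Real.log (R^2/l))^2 + 9)), fun μ hsum hball n hn α hα hαle => ?_⟩
  have h0n : 0 < n := lt_of_lt_of_le (Real.exp_pos _) hn
  -- preprocessed hypotheses for core_ineq
  have hLb : max (max (Real.exp (21 + 9 * max 0 (-Real.log (2*γ)))) ((8+8*p)^4))
      ((Real.log (R^2/l))^2 + 9) ≤ Real.log n := by
    have := Real.log_le_log (Real.exp_pos _) hn
    rwa [Real.log_exp] at this
  have e1 : Real.exp (21 + 9 * max 0 (-Real.log (2*γ))) ≤ Real.log n :=
    le_trans (le_trans (le_max_left _ _) (le_max_left _ _)) hLb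
  have e2 : (8+8*p)^4 ≤ Real.log n :=
    le_trans (le_trans (le_max_right _ _) (le_max_left _ _)) hLb
  have e3 : (Real.log (R^2/l))^2 + 9 ≤ Real.log n := le_trans (le_max_right _ _) hLb
  have hL0 : 0 < Real.log n := lt_of_lt_of_le (Real.exp_pos _) e1
  have hlL : 21 + 9 * max 0 (-Real.log (2*γ)) ≤ Real.log (Real.log n) :=
    (Real.le_log_iff_exp_le hL0).2 e1
  have hsQ8 : 8 + 8*p ≤ Real.sqrt (Real.sqrt (Real.log n)) := by
    have h1 : ((8+8*p)^2)^2 ≤ Real.log n := by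
      calc ((8+8*p)^2)^2 = (8+8*p)^4 := by ring
      _ ≤ Real.log n := e2
    have h2 : (8+8*p)^2 ≤ Real.sqrt (Real.log n) := by
      rw [show ((8+8*p)^2 : ℝ) = Real.sqrt (((8+8*p)^2)^2) from
        (Real.sqrt_sq (by positivity)).symm]
      exact Real.sqrt_le_sqrt h1
    rw [show ((8+8*p) : ℝ) = Real.sqrt ((8+8*p)^2) from (Real.sqrt_sq (by positivity)).symm]
    exact Real.sqrt_le_sqrt h2
  have hQR : Real.log (R^2/l) ≤ Real.sqrt (Real.log n) := by
    calc Real.log (R^2/l) ≤ |Real.log (R^2/l)| := le_abs_self _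
    _ = Real.sqrt ((Real.log (R^2/l))^2) := (Real.sqrt_sq_eq_abs _).symm
    _ ≤ Real.sqrt (Real.log n) := Real.sqrt_le_sqrt (by linarith)
  -- sum bound
  set K := Real.exp ((2 + 2*α) * Real.log ((2 + 2*α)/(2*γ))) with hK
  have hterm : ∀ i : ℕ, n ^ 2 * ((i : ℝ) + 1) ^ (1 + 2 * α) * (μ (i + 1)) ^ 2 *
      Real.log ((i : ℝ) + 1) / ((((i : ℝ) + 1) ^ (1 + 2 * α + 2 * p) + n) ^ 2)
      ≤ K * (Real.exp (2 * γ * ((i : ℝ) + 1)) * (μ (i + 1)) ^ 2) := fun i =>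
    term_le γ p hγ hp n α (μ (i+1)) ((i : ℝ) + 1) h0n hα
      (by have : (0:ℝ) ≤ (i:ℝ) := Nat.cast_nonneg i; linarith)
  have htermnonneg : ∀ i : ℕ, 0 ≤ n ^ 2 * ((i : ℝ) + 1) ^ (1 + 2 * α) * (μ (i + 1)) ^ 2 *
      Real.log ((i : ℝ) + 1) / ((((i : ℝ) + 1) ^ (1 + 2 * α + 2 * p) + n) ^ 2) := by
    intro i
    have hx1 : (1:ℝ) ≤ (i:ℝ) + 1 := by have : (0:ℝ) ≤ (i:ℝ) := Nat.cast_nonneg i; linarith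
    have hlog : 0 ≤ Real.log ((i:ℝ) + 1) := Real.log_nonneg hx1
    have hr : 0 ≤ ((i:ℝ)+1) ^ (1 + 2*α) := Real.rpow_nonneg (by linarith) _
    apply div_nonneg _ (sq_nonneg _)
    have : 0 ≤ n^2 * ((i:ℝ)+1) ^ (1 + 2*α) * (μ (i+1))^2 := by positivity
    exact mul_nonneg this hlog
  have hg : Summable (fun i : ℕ => K * (Real.exp (2 * γ * ((i : ℝ) + 1)) * (μ (i + 1)) ^ 2)) :=
    hsum.mul_left K
  have htermsum : Summable (fun i : ℕ => n ^ 2 * ((i : ℝ) + 1) ^ (1 + 2 * α) * (μ (i + 1)) ^ 2 *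
      Real.log ((i : ℝ) + 1) / ((((i : ℝ) + 1) ^ (1 + 2 * α + 2 * p) + n) ^ 2)) :=
    Summable.of_nonneg_of_le htermnonneg hterm hg
  have hS : (∑' i : ℕ, n ^ 2 * ((i : ℝ) + 1) ^ (1 + 2 * α) * (μ (i + 1)) ^ 2 *
      Real.log ((i : ℝ) + 1) / ((((i : ℝ) + 1) ^ (1 + 2 * α + 2 * p) + n) ^ 2)) ≤ K * R^2 := by
    calc (∑' i : ℕ, n ^ 2 * ((i : ℝ) + 1) ^ (1 + 2 * α) * (μ (i + 1)) ^ 2 *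
        Real.log ((i : ℝ) + 1) / ((((i : ℝ) + 1) ^ (1 + 2 * α + 2 * p) + n) ^ 2))
        ≤ ∑' i : ℕ, K * (Real.exp (2 * γ * ((i : ℝ) + 1)) * (μ (i + 1)) ^ 2) :=
          Summable.tsum_le_tsum hterm htermsum hg
    _ = K * ∑' i : ℕ, Real.exp (2 * γ * ((i : ℝ) + 1)) * (μ (i + 1)) ^ 2 := tsum_mul_left
    _ ≤ K * R^2 := mul_le_mul_of_nonneg_left hball (Real.exp_pos _).le
  have hP : 0 ≤ (1 + 2 * α + 2 * p) / (n ^ (1 / (1 + 2 * α + 2 * p)) * Real.log n) := by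
    apply div_nonneg (by linarith)
    exact mul_nonneg (Real.rpow_nonneg h0n.le _) hL0.le
  calc (1 + 2 * α + 2 * p) / (n ^ (1 / (1 + 2 * α + 2 * p)) * Real.log n) *
          ∑' i : ℕ, n ^ 2 * ((i : ℝ) + 1) ^ (1 + 2 * α) * (μ (i + 1)) ^ 2 *
            Real.log ((i : ℝ) + 1) / ((((i : ℝ) + 1) ^ (1 + 2 * α + 2 * p) + n) ^ 2)
      ≤ (1 + 2 * α + 2 * p) / (n ^ (1 / (1 + 2 * α + 2 * p)) * Real.log n) * (K * R^2) :=
        mul_le_mul_of_nonneg_left hS hP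
  _ ≤ l := core_ineq γ R p l hγ hR hp hl n α h0n hL0 hlL hsQ8 hQR hα hαle
end

section
/- Fix c, γ > 0 and p ≥ 0, and suppose the real sequence μ satisfies μ_i ≥ c·i^{−γ−1/2} for every i ≥ 1. Then for any L > 0 there is a constant C₀ > 0 depending only on c and γ such that for all sufficiently large n, h_n(γ_n) ≥ L (log n)², where γ_n = γ + C₀ (log log n)/(log n). -/
open Real Filter in
set_option maxHeartbeats 1600000 in
private lemma stmt11_aux (c γ p L n : ℝ) (hc : 0 < c) (hγ : 0 < γ) (hp : 0 ≤ p) (hL : 0 < L)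
    (μ : ℕ → ℝ) (hμsum : Summable (fun i : ℕ => (μ (i + 1)) ^ 2))
    (hμ : ∀ i : ℕ, c * ((i : ℝ) + 1) ^ (-γ - 1 / 2) ≤ μ (i + 1))
    (hn2 : (2:ℝ) ≤ n) (hln1 : (1:ℝ) ≤ Real.log n)
    (hδ1 : 2 * (3 + 2 * γ + 2 * p) * Real.log (Real.log n) / Real.log n ≤ 1)
    (hnB : (2:ℝ) ≤ n ^ (1 / (3 + 2 * γ + 2 * p)))
    (hlnB : 6 * (3 + 2 * γ + 2 * p) ≤ Real.log n)
    (hlnL : 512 * L / c ^ 2 ≤ Real.log n) :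
    L * Real.log n ^ 2 ≤
      (1 + 2 * (γ + 2 * (3 + 2 * γ + 2 * p) * Real.log (Real.log n) / Real.log n) + 2 * p) /
          (n ^ (1 / (1 + 2 * (γ + 2 * (3 + 2 * γ + 2 * p) * Real.log (Real.log n) / Real.log n) + 2 * p)) *
            Real.log n) *
        ∑' i : ℕ, n ^ 2 *
          ((i : ℝ) + 1) ^ (1 + 2 * (γ + 2 * (3 + 2 * γ + 2 * p) * Real.log (Real.log n) / Real.log n)) *
          (μ (i + 1)) ^ 2 * Real.log ((i : ℝ) + 1) /
          ((((i : ℝ) + 1) ^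
              (1 + 2 * (γ + 2 * (3 + 2 * γ + 2 * p) * Real.log (Real.log n) / Real.log n) + 2 * p) + n) ^ 2) := by
  set B : ℝ := 3 + 2 * γ + 2 * p with hB
  set C₀ : ℝ := 2 * B with hC₀
  set δ : ℝ := C₀ * Real.log (Real.log n) / Real.log n with hδ
  set α : ℝ := γ + δ with hα
  set β : ℝ := 1 + 2 * α + 2 * p with hβ
  set R : ℝ := n ^ (1 / β) with hRdef
  clear_value R
  clear_value β
  clear_value α
  clear_value δ
  clear_value C₀
  clear_value B
  have hn0 : (0:ℝ) < n := by linarith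
  have hln0 : (0:ℝ) < Real.log n := by linarith
  have hlln0 : (0:ℝ) ≤ Real.log (Real.log n) := Real.log_nonneg hln1
  have hB0 : (0:ℝ) < B := by rw [hB]; linarith
  have hC₀0 : (0:ℝ) < C₀ := by rw [hC₀]; linarith
  have hδ0 : (0:ℝ) ≤ δ := by rw [hδ]; positivity
  have hα0 : (0:ℝ) < α := by rw [hα]; linarith
  have hβ1 : (1:ℝ) ≤ β := by rw [hβ]; linarith
  have hβ0 : (0:ℝ) < β := by linarith
  have hβB : β ≤ B := by rw [hβ, hB, hα]; linarith
  have hR0 : (0:ℝ) < R := by rw [hRdef]; positivity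
  have hR2 : (2:ℝ) ≤ R := by
    refine hnB.trans ?_
    rw [hRdef]
    exact Real.rpow_le_rpow_of_exponent_le (by linarith)
      (one_div_le_one_div_of_le hβ0 hβB)
  set m : ℕ := ⌊R⌋₊ with hm
  set k : ℕ := m / 2 with hk
  clear_value k
  clear_value m
  have hmR : (m:ℝ) ≤ R := by rw [hm]; exact Nat.floor_le hR0.le
  have hRm : R / 2 ≤ (m:ℝ) := by
    have := Nat.lt_floor_add_one R
    rw [← hm] at this
    linarith
  have hmk : m ≤ 2 * k + 1 := by omega
  have hkm2 : (m:ℝ) / 2 ≤ (k:ℝ) + 1 := by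
    have : (m:ℝ) ≤ 2 * (k:ℝ) + 1 := by exact_mod_cast hmk
    linarith
  have hk1R : R / 4 ≤ (k:ℝ) + 1 := by linarith
  have hk1 : (1:ℝ) ≤ (k:ℝ) + 1 := by
    have : (0:ℝ) ≤ (k:ℝ) := Nat.cast_nonneg k
    linarith
  -- the summand
  set f : ℕ → ℝ := fun i => n ^ 2 * ((i:ℝ) + 1) ^ (1 + 2 * α) * μ (i + 1) ^ 2 *
      Real.log ((i:ℝ) + 1) / (((i:ℝ) + 1) ^ β + n) ^ 2 with hf
  clear_value f
  have hx1 : ∀ i : ℕ, (1:ℝ) ≤ (i:ℝ) + 1 := fun i => by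
    have : (0:ℝ) ≤ (i:ℝ) := Nat.cast_nonneg i
    linarith
  have hx0 : ∀ i : ℕ, (0:ℝ) < (i:ℝ) + 1 := fun i => by positivity
  have hD0 : ∀ i : ℕ, (0:ℝ) < (((i:ℝ) + 1) ^ β + n) ^ 2 := by
    intro i
    have : (0:ℝ) < ((i:ℝ) + 1) ^ β := Real.rpow_pos_of_pos (hx0 i) β
    positivity
  have hf0 : ∀ i : ℕ, 0 ≤ f i := by
    intro i
    rw [hf]
    have h1 : (0:ℝ) ≤ Real.log ((i:ℝ) + 1) := Real.log_nonneg (hx1 i)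
    have h2 : (0:ℝ) ≤ ((i:ℝ) + 1) ^ (1 + 2 * α) := (Real.rpow_pos_of_pos (hx0 i) _).le
    have := hD0 i
    positivity
  have hfsum : Summable f := by
    refine Summable.of_nonneg_of_le hf0 (fun i => ?_) (hμsum.mul_left (n ^ 2))
    · rw [hf]
      have hxx := hx0 i
      have hxx1 := hx1 i
      have hlogx : Real.log ((i:ℝ) + 1) ≤ (i:ℝ) + 1 := Real.log_le_self hxx.le
      have hlog0 : (0:ℝ) ≤ Real.log ((i:ℝ) + 1) := Real.log_nonneg hxx1
      have key : ((i:ℝ) + 1) ^ (1 + 2 * α) * Real.log ((i:ℝ) + 1) ≤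
          (((i:ℝ) + 1) ^ β + n) ^ 2 := by
        have h1 : ((i:ℝ) + 1) ^ (1 + 2 * α) * Real.log ((i:ℝ) + 1) ≤
            ((i:ℝ) + 1) ^ (1 + 2 * α) * ((i:ℝ) + 1) :=
          mul_le_mul_of_nonneg_left hlogx (Real.rpow_pos_of_pos hxx _).le
        have h2 : ((i:ℝ) + 1) ^ (1 + 2 * α) * ((i:ℝ) + 1) = ((i:ℝ) + 1) ^ (1 + 2 * α + 1) :=
          (Real.rpow_add_one hxx.ne' _).symm
        have h3 : ((i:ℝ) + 1) ^ (1 + 2 * α + 1) ≤ ((i:ℝ) + 1) ^ (β + β) :=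
          Real.rpow_le_rpow_of_exponent_le hxx1 (by rw [hβ]; linarith)
        have h4 : ((i:ℝ) + 1) ^ (β + β) = (((i:ℝ) + 1) ^ β) ^ 2 := by
          rw [Real.rpow_add hxx, sq]
        have h5 : (((i:ℝ) + 1) ^ β) ^ 2 ≤ (((i:ℝ) + 1) ^ β + n) ^ 2 := by
          have := (Real.rpow_pos_of_pos hxx β).le
          apply pow_le_pow_left₀ this (by linarith)
        calc ((i:ℝ) + 1) ^ (1 + 2 * α) * Real.log ((i:ℝ) + 1) ≤ _ := h1
          _ = _ := h2
          _ ≤ _ := h3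
          _ = _ := h4
          _ ≤ _ := h5
      rw [div_le_iff₀ (hD0 i)]
      calc n ^ 2 * ((i:ℝ) + 1) ^ (1 + 2 * α) * μ (i + 1) ^ 2 * Real.log ((i:ℝ) + 1)
          = (n ^ 2 * μ (i + 1) ^ 2) * (((i:ℝ) + 1) ^ (1 + 2 * α) * Real.log ((i:ℝ) + 1)) := by
            ring
        _ ≤ (n ^ 2 * μ (i + 1) ^ 2) * ((((i:ℝ) + 1) ^ β + n) ^ 2) := by
            apply mul_le_mul_of_nonneg_left key (by positivity)
  -- lower bound each term for i ∈ [k, m)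
  set T : ℝ := c ^ 2 / 4 * ((k:ℝ) + 1) ^ (2 * δ) * Real.log ((k:ℝ) + 1) with hT
  clear_value T
  have hterm : ∀ i ∈ Finset.Ico k m, T ≤ f i := by
    intro i hi
    rw [Finset.mem_Ico] at hi
    have hik : (k:ℝ) + 1 ≤ (i:ℝ) + 1 := by
      have : (k:ℝ) ≤ (i:ℝ) := by exact_mod_cast hi.1
      linarith
    have him : (i:ℝ) + 1 ≤ (m:ℝ) := by
      have : (i:ℝ) + 1 ≤ (m:ℝ) := by exact_mod_cast hi.2
      exact this
    have hxx := hx0 i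
    have hxx1 := hx1 i
    have hxR : (i:ℝ) + 1 ≤ R := him.trans hmR
    have hxβn : ((i:ℝ) + 1) ^ β ≤ n := by
      calc ((i:ℝ) + 1) ^ β ≤ R ^ β := Real.rpow_le_rpow hxx.le hxR hβ0.le
        _ = n := by
          rw [hRdef, ← Real.rpow_mul hn0.le, one_div_mul_cancel hβ0.ne', Real.rpow_one]
    have hD : (((i:ℝ) + 1) ^ β + n) ^ 2 ≤ 4 * n ^ 2 := by
      have h0 : (0:ℝ) ≤ ((i:ℝ) + 1) ^ β + n := by positivity
      calc (((i:ℝ) + 1) ^ β + n) ^ 2 ≤ (2 * n) ^ 2 :=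
            pow_le_pow_left₀ h0 (by linarith) 2
        _ = 4 * n ^ 2 := by ring
    have hμ2 : c ^ 2 * ((i:ℝ) + 1) ^ (-2 * γ - 1) ≤ μ (i + 1) ^ 2 := by
      have h1 : (0:ℝ) ≤ c * ((i:ℝ) + 1) ^ (-γ - 1 / 2) := by
        have := Real.rpow_pos_of_pos hxx (-γ - 1/2)
        positivity
      have h2 := pow_le_pow_left₀ h1 (hμ i) 2
      calc c ^ 2 * ((i:ℝ) + 1) ^ (-2 * γ - 1)
          = (c * ((i:ℝ) + 1) ^ (-γ - 1 / 2)) ^ 2 := by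
            rw [mul_pow, sq (((i:ℝ) + 1) ^ (-γ - 1 / 2)), ← Real.rpow_add hxx]
            ring_nf
        _ ≤ μ (i + 1) ^ 2 := h2
    -- numerator lower bound
    have hnum : n ^ 2 * (c ^ 2 * ((i:ℝ) + 1) ^ (2 * δ) * Real.log ((i:ℝ) + 1)) ≤
        n ^ 2 * ((i:ℝ) + 1) ^ (1 + 2 * α) * μ (i + 1) ^ 2 * Real.log ((i:ℝ) + 1) := by
      have hxmerge : ((i:ℝ) + 1) ^ (1 + 2 * α) * ((i:ℝ) + 1) ^ (-2 * γ - 1)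
          = ((i:ℝ) + 1) ^ (2 * δ) := by
        rw [← Real.rpow_add hxx]
        congr 1
        rw [hα]; ring
      have hlog0 : (0:ℝ) ≤ Real.log ((i:ℝ) + 1) := Real.log_nonneg hxx1
      have hpow0 : (0:ℝ) ≤ ((i:ℝ) + 1) ^ (1 + 2 * α) := (Real.rpow_pos_of_pos hxx _).le
      calc n ^ 2 * (c ^ 2 * ((i:ℝ) + 1) ^ (2 * δ) * Real.log ((i:ℝ) + 1))
          = (n ^ 2 * ((i:ℝ) + 1) ^ (1 + 2 * α) * Real.log ((i:ℝ) + 1)) *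
              (c ^ 2 * ((i:ℝ) + 1) ^ (-2 * γ - 1)) := by
            rw [← hxmerge]; ring
        _ ≤ (n ^ 2 * ((i:ℝ) + 1) ^ (1 + 2 * α) * Real.log ((i:ℝ) + 1)) * μ (i + 1) ^ 2 := by
            apply mul_le_mul_of_nonneg_left hμ2 (by positivity)
        _ = n ^ 2 * ((i:ℝ) + 1) ^ (1 + 2 * α) * μ (i + 1) ^ 2 * Real.log ((i:ℝ) + 1) := by
            ring
    have hlogk : Real.log ((k:ℝ) + 1) ≤ Real.log ((i:ℝ) + 1) := Real.log_le_log (by positivity) hik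
    have hpowk : ((k:ℝ) + 1) ^ (2 * δ) ≤ ((i:ℝ) + 1) ^ (2 * δ) :=
      Real.rpow_le_rpow (by positivity) hik (by positivity)
    have hlogk0 : (0:ℝ) ≤ Real.log ((k:ℝ) + 1) := Real.log_nonneg hk1
    have hTnum : T * (4 * n ^ 2) ≤ n ^ 2 * (c ^ 2 * ((i:ℝ) + 1) ^ (2 * δ) * Real.log ((i:ℝ) + 1)) := by
      have : T ≤ c ^ 2 / 4 * ((i:ℝ) + 1) ^ (2 * δ) * Real.log ((i:ℝ) + 1) := by
        rw [hT]
        have hp0 : (0:ℝ) ≤ ((k:ℝ) + 1) ^ (2 * δ) := by positivity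
        apply mul_le_mul (mul_le_mul_of_nonneg_left hpowk (by positivity)) hlogk hlogk0
        positivity
      calc T * (4 * n ^ 2) ≤ (c ^ 2 / 4 * ((i:ℝ) + 1) ^ (2 * δ) * Real.log ((i:ℝ) + 1)) * (4 * n ^ 2) :=
            mul_le_mul_of_nonneg_right this (by positivity)
        _ = n ^ 2 * (c ^ 2 * ((i:ℝ) + 1) ^ (2 * δ) * Real.log ((i:ℝ) + 1)) := by ring
    rw [hf]
    rw [le_div_iff₀ (hD0 i)]
    calc T * ((((i:ℝ) + 1) ^ β + n) ^ 2) ≤ T * (4 * n ^ 2) := by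
          apply mul_le_mul_of_nonneg_left hD
          rw [hT]; positivity
      _ ≤ n ^ 2 * (c ^ 2 * ((i:ℝ) + 1) ^ (2 * δ) * Real.log ((i:ℝ) + 1)) := hTnum
      _ ≤ _ := hnum
  -- sum bounds
  have htsum : ∑ i ∈ Finset.Ico k m, f i ≤ ∑' i, f i :=
    Summable.sum_le_tsum _ (fun i _ => hf0 i) hfsum
  have hsum1 : ((Finset.Ico k m).card : ℝ) * T ≤ ∑ i ∈ Finset.Ico k m, f i := by
    have h := Finset.card_nsmul_le_sum (Finset.Ico k m) f T hterm
    simpa [nsmul_eq_mul] using h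
  have hklem : k ≤ m := by rw [hk]; exact Nat.div_le_self m 2
  have hcardval : ((Finset.Ico k m).card : ℝ) = (m:ℝ) - (k:ℝ) := by
    rw [Nat.card_Ico, Nat.cast_sub hklem]
  have hkle : (k:ℝ) ≤ (m:ℝ) / 2 := by
    rw [hk]
    have := Nat.cast_div_le (α := ℝ) (m := m) (n := 2)
    simpa using this
  have hcardR : R / 4 ≤ ((Finset.Ico k m).card : ℝ) := by
    rw [hcardval]; linarith
  -- lower bound on T
  have hstepA : (R / 4) ^ (2 * δ) ≤ ((k:ℝ) + 1) ^ (2 * δ) :=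
    Real.rpow_le_rpow (by positivity) hk1R (by positivity)
  have hstepB : (R / 4) ^ (2 * δ) = R ^ (2 * δ) / (4:ℝ) ^ (2 * δ) :=
    Real.div_rpow hR0.le (by norm_num : (0:ℝ) ≤ 4) (2 * δ)
  have hstepC : (4:ℝ) ^ (2 * δ) ≤ 16 := by
    calc (4:ℝ) ^ (2 * δ) ≤ (4:ℝ) ^ (2:ℝ) :=
          Real.rpow_le_rpow_of_exponent_le (by norm_num) (by linarith only [hδ1])
      _ = 16 := by
          rw [show (2:ℝ) = ((2:ℕ):ℝ) by norm_num, Real.rpow_natCast]; norm_num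
  have hstepD : Real.log n ^ 4 ≤ R ^ (2 * δ) := by
    have e1 : R ^ (2 * δ) = n ^ (1 / β * (2 * δ)) := by
      rw [hRdef, ← Real.rpow_mul hn0.le]
    have e2 : n ^ (1 / β * (2 * δ)) = Real.exp (Real.log n * (1 / β * (2 * δ))) :=
      Real.rpow_def_of_pos hn0 _
    have e3 : Real.log n * (1 / β * (2 * δ)) = 2 * C₀ * Real.log (Real.log n) / β := by
      rw [hδ]; field_simp
    have e4 : 4 * Real.log (Real.log n) ≤ 2 * C₀ * Real.log (Real.log n) / β := by
      rw [le_div_iff₀ hβ0, hC₀]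
      have h := mul_le_mul_of_nonneg_left hβB (by positivity : (0:ℝ) ≤ 4 * Real.log (Real.log n))
      linarith only [h]
    have e5 : Real.exp (4 * Real.log (Real.log n)) = Real.log n ^ 4 := by
      rw [show (4:ℝ) * Real.log (Real.log n) = Real.log (Real.log n ^ 4) by
        rw [Real.log_pow]; norm_num]
      exact Real.exp_log (by positivity)
    rw [e1, e2, e3, ← e5]
    exact Real.exp_le_exp.mpr e4
  have hpowk_lb : Real.log n ^ 4 / 16 ≤ ((k:ℝ) + 1) ^ (2 * δ) := by
    have h16 : R ^ (2 * δ) / 16 ≤ (R / 4) ^ (2 * δ) := by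
      rw [hstepB]
      exact div_le_div_of_nonneg_left (by positivity) (Real.rpow_pos_of_pos (by norm_num) _) hstepC
    calc Real.log n ^ 4 / 16 ≤ R ^ (2 * δ) / 16 := by
          apply div_le_div_of_nonneg_right hstepD (by norm_num)
      _ ≤ (R / 4) ^ (2 * δ) := h16
      _ ≤ _ := hstepA
  have hlogk_lb : Real.log n / (2 * β) ≤ Real.log ((k:ℝ) + 1) := by
    have h1 : Real.log (R / 4) ≤ Real.log ((k:ℝ) + 1) :=
      Real.log_le_log (by positivity) hk1R
    have h2 : Real.log (R / 4) = 1 / β * Real.log n - Real.log 4 := by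
      rw [Real.log_div hR0.ne' (by norm_num), hRdef, Real.log_rpow hn0]
    have h3 : Real.log 4 ≤ 3 := by
      have h := Real.log_le_sub_one_of_pos (show (0:ℝ) < 4 by norm_num)
      linarith only [h]
    have h4 : 3 ≤ Real.log n / (2 * β) := by
      rw [le_div_iff₀ (by positivity)]
      linarith only [hβB, hlnB]
    have h5 : 1 / β * Real.log n = 2 * (Real.log n / (2 * β)) := by
      field_simp
    linarith only [h1, h2, h3, h4, h5]
  have hTlb : c ^ 2 / 4 * (Real.log n ^ 4 / 16) * (Real.log n / (2 * β)) ≤ T := by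
    rw [hT]
    apply mul_le_mul (mul_le_mul_of_nonneg_left hpowk_lb (by positivity)) hlogk_lb
      (by positivity) (by positivity)
  -- combine
  have hfinal1 : R / 4 * (c ^ 2 / 4 * (Real.log n ^ 4 / 16) * (Real.log n / (2 * β))) ≤
      ∑' i, f i := by
    calc R / 4 * (c ^ 2 / 4 * (Real.log n ^ 4 / 16) * (Real.log n / (2 * β)))
        ≤ ((Finset.Ico k m).card : ℝ) * T :=
          mul_le_mul hcardR hTlb (by positivity) (by positivity)
      _ ≤ ∑ i ∈ Finset.Ico k m, f i := hsum1
      _ ≤ ∑' i, f i := htsum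
  have hkey : β / (R * Real.log n) *
      (R / 4 * (c ^ 2 / 4 * (Real.log n ^ 4 / 16) * (Real.log n / (2 * β)))) =
      c ^ 2 * Real.log n ^ 4 / 512 := by
    field_simp
    ring
  have h512 : 512 * L ≤ c ^ 2 * Real.log n := by
    rw [div_le_iff₀ (by positivity)] at hlnL
    linarith only [hlnL]
  have hmain : L * Real.log n ^ 2 ≤ c ^ 2 * Real.log n ^ 4 / 512 := by
    have hA := mul_le_mul_of_nonneg_right h512 (by positivity : (0:ℝ) ≤ Real.log n ^ 3)
    have hB2 : Real.log n ^ 2 ≤ Real.log n ^ 3 := pow_le_pow_right₀ hln1 (by norm_num)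
    have hC := mul_le_mul_of_nonneg_left hB2 (by positivity : (0:ℝ) ≤ 512 * L)
    linarith only [hA, hC]
  calc L * Real.log n ^ 2 ≤ c ^ 2 * Real.log n ^ 4 / 512 := hmain
    _ = β / (R * Real.log n) *
        (R / 4 * (c ^ 2 / 4 * (Real.log n ^ 4 / 16) * (Real.log n / (2 * β)))) := hkey.symm
    _ ≤ β / (R * Real.log n) * ∑' i, f i :=
        mul_le_mul_of_nonneg_left hfinal1 (by positivity)


open Real Filter in
/-- Lemma 2.1(iii): if μ_i ≥ c i^{−γ−1/2} for all i, then for any L > 0 there is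
C₀ > 0 depending only on c, γ such that h_n(γ + C₀ log log n / log n) ≥ L (log n)²
for all large n. -/
theorem stmt_11 (c γ p : ℝ) (hc : 0 < c) (hγ : 0 < γ) (hp : 0 ≤ p) :
    ∀ L > 0, ∃ C₀ > 0, ∃ N : ℝ, ∀ (μ : ℕ → ℝ),
      Summable (fun i : ℕ => (μ (i + 1)) ^ 2) →
      (∀ i : ℕ, c * ((i : ℝ) + 1) ^ (-γ - 1 / 2) ≤ μ (i + 1)) →
      ∀ n ≥ N,
        L * Real.log n ^ 2 ≤
          (1 + 2 * (γ + C₀ * Real.log (Real.log n) / Real.log n) + 2 * p) /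
              (n ^ (1 / (1 + 2 * (γ + C₀ * Real.log (Real.log n) / Real.log n) + 2 * p)) *
                Real.log n) *
            ∑' i : ℕ, n ^ 2 *
              ((i : ℝ) + 1) ^ (1 + 2 * (γ + C₀ * Real.log (Real.log n) / Real.log n)) *
              (μ (i + 1)) ^ 2 * Real.log ((i : ℝ) + 1) /
              ((((i : ℝ) + 1) ^
                  (1 + 2 * (γ + C₀ * Real.log (Real.log n) / Real.log n) + 2 * p) + n) ^ 2) := by
  intro L hL
  set B : ℝ := 3 + 2 * γ + 2 * p with hB
  have hB1 : (1:ℝ) ≤ B := by simp only [hB]; linarith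
  have hB0 : (0:ℝ) < B := by linarith
  set C₀ : ℝ := 2 * B with hC₀
  have hC₀0 : (0:ℝ) < C₀ := by positivity
  refine ⟨C₀, hC₀0, ?_⟩
  -- eventually conditions on n
  have E1 : ∀ᶠ n : ℝ in atTop, (2:ℝ) ≤ n := eventually_ge_atTop 2
  have E2 : ∀ᶠ n : ℝ in atTop, (1:ℝ) ≤ Real.log n :=
    Real.tendsto_log_atTop.eventually_ge_atTop 1
  have E3 : ∀ᶠ n : ℝ in atTop, C₀ * Real.log (Real.log n) / Real.log n ≤ 1 := by
    have h0 : Tendsto (fun x : ℝ => Real.log x / x) atTop (nhds 0) := by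
      simpa using Real.isLittleO_log_id_atTop.tendsto_div_nhds_zero
    have h1 : Tendsto (fun n : ℝ => Real.log (Real.log n) / Real.log n) atTop (nhds 0) :=
      h0.comp Real.tendsto_log_atTop
    have h2 : ∀ᶠ n : ℝ in atTop, Real.log (Real.log n) / Real.log n ≤ 1 / C₀ := by
      filter_upwards [h1.eventually (eventually_le_nhds (by positivity : (0:ℝ) < 1 / C₀))] with
        n hn using hn
    filter_upwards [h2] with n hn
    rw [mul_div_assoc]
    calc C₀ * (Real.log (Real.log n) / Real.log n) ≤ C₀ * (1 / C₀) :=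
          mul_le_mul_of_nonneg_left hn hC₀0.le
      _ = 1 := by field_simp
  have E4 : ∀ᶠ n : ℝ in atTop, (2:ℝ) ≤ n ^ (1 / B) :=
    (tendsto_rpow_atTop (by positivity : (0:ℝ) < 1 / B)).eventually_ge_atTop 2
  have E5 : ∀ᶠ n : ℝ in atTop, 6 * B ≤ Real.log n :=
    Real.tendsto_log_atTop.eventually_ge_atTop _
  have E6 : ∀ᶠ n : ℝ in atTop, 512 * L / c ^ 2 ≤ Real.log n :=
    Real.tendsto_log_atTop.eventually_ge_atTop _
  obtain ⟨N, hN⟩ := eventually_atTop.mp (((((E1.and E2).and E3).and E4).and E5).and E6)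
  refine ⟨N, ?_⟩
  intro μ hμsum hμ n hn
  obtain ⟨⟨⟨⟨⟨hn2, hln1⟩, hδ1⟩, hnB⟩, hlnB⟩, hlnL⟩ := hN n hn
  exact stmt11_aux c γ p L n hc hγ hp hL μ hμsum hμ hn2 hln1 hδ1 hnB hlnB hlnL
end

section
/- Fix p ≥ 0 and a real sequence μ with μ_j ≠ 0 for some j ≥ 2. Then for any L > 0, for all sufficiently large n there exists α ≤ (log n)/(2 log 2) − 1/2 − p with h_n(α) ≥ L (log n)². -/
open Filter Real

set_option maxHeartbeats 1000000 in
/-- Lemma 2.1(iv): if μ_j ≠ 0 for some j ≥ 2, then for any L > 0 and all large n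
there exists α ≤ log n/(2 log 2) − 1/2 − p with h_n(α) ≥ L (log n)². -/
theorem stmt_12 (p : ℝ) (hp : 0 ≤ p) (μ : ℕ → ℝ)
    (hμsq : Summable (fun i : ℕ => (μ (i + 1)) ^ 2))
    (hμ : ∃ j : ℕ, 2 ≤ j ∧ μ j ≠ 0) :
    ∀ L > 0, ∃ N : ℝ, ∀ n ≥ N, ∃ α : ℝ,
      0 < α ∧ α ≤ Real.log n / (2 * Real.log 2) - 1 / 2 - p ∧
      L * Real.log n ^ 2 ≤
        (1 + 2 * α + 2 * p) / (n ^ (1 / (1 + 2 * α + 2 * p)) * Real.log n) *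
          ∑' i : ℕ, n ^ 2 * ((i : ℝ) + 1) ^ (1 + 2 * α) * (μ (i + 1)) ^ 2 *
            Real.log ((i : ℝ) + 1) / ((((i : ℝ) + 1) ^ (1 + 2 * α + 2 * p) + n) ^ 2) := by
  obtain ⟨j, hj2, hμj⟩ := hμ
  obtain ⟨k, rfl⟩ : ∃ k, j = k + 1 := ⟨j - 1, by omega⟩
  intro L hL
  set jr : ℝ := (k : ℝ) + 1 with hjr
  have hjr2 : (2:ℝ) ≤ jr := by
    have hk : (1:ℕ) ≤ k := by omega
    have : (1:ℝ) ≤ (k:ℝ) := by exact_mod_cast hk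
    simp only [hjr]; linarith
  have hjr1 : (1:ℝ) < jr := by linarith
  have hjrpos : (0:ℝ) < jr := by linarith
  have hlogj : 0 < Real.log jr := Real.log_pos hjr1
  have hlog2 : 0 < Real.log 2 := Real.log_pos one_lt_two
  have hlog2j : Real.log 2 ≤ Real.log jr := Real.log_le_log (by norm_num) hjr2
  have hjrpow : 0 < jr ^ (1 + 2*p) := Real.rpow_pos_of_pos hjrpos _
  have hμpos : 0 < μ (k+1) ^ 2 := pow_two_pos_of_ne_zero hμj
  set c : ℝ := μ (k+1) ^ 2 / (4 * jr ^ (1 + 2*p)) with hc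
  have hcpos : 0 < c := div_pos hμpos (by positivity)
  -- eventual facts
  have h1 : ∀ᶠ n : ℝ in atTop, L * Real.log n ^ 2 ≤ c * n := by
    have ht : Tendsto (fun x : ℝ => Real.log x ^ 2 / (1 * x + 0)) atTop (nhds 0) :=
      Real.tendsto_pow_log_div_mul_add_atTop 1 0 2 one_ne_zero
    have hev := ht.eventually_lt_const (show (0:ℝ) < c / L by positivity)
    filter_upwards [hev, eventually_gt_atTop (0:ℝ)] with x hx hx0
    have hx' : Real.log x ^ 2 / x < c / L := by simpa using hx
    have := (div_lt_div_iff₀ hx0 hL).mp hx'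
    nlinarith
  have h2 : ∀ᶠ n : ℝ in atTop, jr ^ (1 + 2*p) < n := eventually_gt_atTop _
  have h3 : ∀ᶠ n : ℝ in atTop, (1:ℝ) < n := eventually_gt_atTop 1
  obtain ⟨N, hN⟩ := eventually_atTop.mp ((h1.and h2).and h3)
  refine ⟨N, fun n hn => ?_⟩
  obtain ⟨⟨hn1, hn2⟩, hn3⟩ := hN n hn
  have hnpos : (0:ℝ) < n := by linarith
  have hlogn : 0 < Real.log n := Real.log_pos hn3
  set α : ℝ := (Real.log n / Real.log jr - 1 - 2*p)/2 with hα
  have hE : 1 + 2*α + 2*p = Real.log n / Real.log jr := by rw [hα]; ring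
  have hαpos : 0 < α := by
    have h' : (1 + 2*p) * Real.log jr < Real.log n := by
      have := Real.log_lt_log (Real.rpow_pos_of_pos hjrpos _) hn2
      rwa [Real.log_rpow hjrpos] at this
    have : 1 + 2*p < Real.log n / Real.log jr := (lt_div_iff₀ hlogj).mpr h'
    rw [hα]; linarith
  have hαle : α ≤ Real.log n / (2 * Real.log 2) - 1 / 2 - p := by
    have hdiv : Real.log n / Real.log jr ≤ Real.log n / Real.log 2 :=
      div_le_div_of_nonneg_left hlogn.le hlog2 hlog2j
    rw [hα]
    have : Real.log n / (2 * Real.log 2) = (Real.log n / Real.log 2) / 2 := by ring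
    rw [this]; linarith
  refine ⟨α, hαpos, hαle, ?_⟩
  have hEpos : 0 < 1 + 2*α + 2*p := by rw [hE]; positivity
  have hpow : jr ^ (1 + 2*α + 2*p) = n := by
    rw [hE, Real.rpow_def_of_pos hjrpos,
      show Real.log jr * (Real.log n / Real.log jr) = Real.log n by
        field_simp]
    exact Real.exp_log hnpos
  have hroot : n ^ (1/(1 + 2*α + 2*p)) = jr := by
    rw [hE, one_div, Real.rpow_def_of_pos hnpos,
      show Real.log n * (Real.log n / Real.log jr)⁻¹ = Real.log jr by
        field_simp]
    exact Real.exp_log hjrpos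
  set f : ℕ → ℝ := fun i => n ^ 2 * ((i : ℝ) + 1) ^ (1 + 2 * α) * (μ (i + 1)) ^ 2 *
      Real.log ((i : ℝ) + 1) / ((((i : ℝ) + 1) ^ (1 + 2 * α + 2 * p) + n) ^ 2) with hf
  have hfnonneg : ∀ i, 0 ≤ f i := by
    intro i
    have h1 : (0:ℝ) ≤ (i:ℝ) + 1 := by positivity
    have hlogb : 0 ≤ Real.log ((i:ℝ)+1) := Real.log_nonneg (by
      have : (0:ℝ) ≤ (i:ℝ) := Nat.cast_nonneg i
      linarith)
    apply div_nonneg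
    · exact mul_nonneg (mul_nonneg (mul_nonneg (by positivity)
        (Real.rpow_nonneg h1 _)) (sq_nonneg _)) hlogb
    · positivity
  have hbound : ∀ i, f i ≤ n ^ 2 * μ (i+1) ^ 2 := by
    intro i
    set b : ℝ := (i:ℝ) + 1 with hb
    have hb1 : (1:ℝ) ≤ b := by
      have : (0:ℝ) ≤ (i:ℝ) := Nat.cast_nonneg i
      simp only [hb]; linarith
    have hbpos : (0:ℝ) < b := lt_of_lt_of_le one_pos hb1
    set e : ℝ := b ^ (1 + 2*α + 2*p) with he
    have hepos : 0 < e := Real.rpow_pos_of_pos hbpos _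
    have hlogb : Real.log b ≤ e := by
      have h1 : Real.log b ≤ b - 1 := Real.log_le_sub_one_of_pos hbpos
      have h2 : b ≤ e := by
        rw [he]
        nth_rewrite 1 [show b = b ^ (1:ℝ) from (Real.rpow_one b).symm]
        exact Real.rpow_le_rpow_of_exponent_le hb1 (by linarith)
      linarith
    have hbb : b ^ (1 + 2*α) ≤ e :=
      Real.rpow_le_rpow_of_exponent_le hb1 (by linarith)
    have hden : e ≤ e + n := by linarith
    have hlogb0 : 0 ≤ Real.log b := Real.log_nonneg hb1
    rw [div_le_iff₀ (by positivity : (0:ℝ) < (e + n) ^ 2)]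
    have step1 : b ^ (1 + 2*α) * Real.log b ≤ e * e :=
      mul_le_mul hbb hlogb hlogb0 hepos.le
    have step2 : e * e ≤ (e + n) * (e + n) := by nlinarith
    calc n ^ 2 * b ^ (1 + 2*α) * μ (i+1) ^ 2 * Real.log b
        = (n ^ 2 * μ (i+1) ^ 2) * (b ^ (1 + 2*α) * Real.log b) := by ring
      _ ≤ (n ^ 2 * μ (i+1) ^ 2) * (e * e) := by
          apply mul_le_mul_of_nonneg_left step1 (by positivity)
      _ ≤ (n ^ 2 * μ (i+1) ^ 2) * ((e + n) * (e + n)) := by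
          apply mul_le_mul_of_nonneg_left step2 (by positivity)
      _ = n ^ 2 * μ (i+1) ^ 2 * (e + n) ^ 2 := by ring
  have hsum : Summable f :=
    Summable.of_nonneg_of_le hfnonneg hbound (hμsq.mul_left (n ^ 2))
  have hjrk : ((k:ℝ) + 1) = jr := rfl
  have hkterm : f k = jr ^ (1 + 2*α) * μ (k+1) ^ 2 * Real.log jr / 4 := by
    have hne : (n:ℝ) ≠ 0 := hnpos.ne'
    simp only [hf, hjrk, hpow]
    field_simp
    ring
  have hle : f k ≤ ∑' i, f i := Summable.le_tsum hsum k (fun i _ => hfnonneg i)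
  set P : ℝ := (1 + 2*α + 2*p) / (n ^ (1/(1 + 2*α + 2*p)) * Real.log n) with hP
  have hPval : P = 1 / (jr * Real.log jr) := by
    rw [hP, hroot, hE]
    field_simp
  have hPpos : 0 < P := by rw [hPval]; positivity
  have h2a : jr ^ (2*α) * jr ^ (1 + 2*p) = n := by
    rw [← Real.rpow_add hjrpos, show 2*α + (1 + 2*p) = 1 + 2*α + 2*p by ring, hpow]
  have hjr2α : jr ^ (2*α) = n / jr ^ (1 + 2*p) := by
    rw [eq_div_iff hjrpow.ne']; exact h2a
  have h1a : jr ^ (1 + 2*α) = jr * jr ^ (2*α) := by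
    rw [show (1 + 2*α) = 1 + 2*α from rfl, Real.rpow_add hjrpos, Real.rpow_one]
  have key : P * f k = c * n := by
    rw [hPval, hkterm, h1a, hjr2α, hc]
    field_simp
  calc L * Real.log n ^ 2 ≤ c * n := hn1
    _ = P * f k := key.symm
    _ ≤ P * ∑' i, f i := mul_le_mul_of_nonneg_left hle hPpos.le
end

section
/- Fix p ≥ 0 and a square-summable real sequence μ. With S_n(α) = ∑_{i=1}^∞ n² i^{1+2α} μ_i² (log i) / (i^{1+2α+2p} + n)², for every n ≥ e² and every ᾱ > 0 and every α ∈ [ᾱ − 1/log n, ᾱ], we have S_n(α) ≥ K · S_n(ᾱ) for an absolute constant K > 0 (one may take K = e^{−2}/4). -/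
/-!
With r = i^(1+2α+2p) and R = i^(1+2ᾱ+2p), the α- and ᾱ-summands are n² μ_i² log i / i^(2p)
times h(r) and h(R), where h(x) = x / (x + n)² agrees with min(x / n², 1 / x) up to a factor 4.
Since 0 ≤ ᾱ - α ≤ 1 / log n we have r ≤ R and r ≥ e⁻² min(R, n): if R ≤ n then i ≤ n, so
i^(-2(ᾱ-α)) ≥ e⁻²; if R ≥ n then log r ≥ log n - 2. Hence e⁻² h(R) / 4 ≤ h(r) termwise.
-/

open Real

theorem div_add_sq_le_of_min_le {c n r R : ℝ} (hc : c ≤ 1) (hn : 0 < n) (hr : 0 < r)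
    (hrR : r ≤ R) (hmin : c * min R n ≤ r) :
    c / 4 * (R / (R + n) ^ 2) ≤ r / (r + n) ^ 2 := by
  have hR : 0 < R := hr.trans_le hrR
  rcases le_or_gt c 0 with hc0 | hc0
  · have : c / 4 * (R / (R + n) ^ 2) ≤ 0 :=
      mul_nonpos_of_nonpos_of_nonneg (by linarith) (by positivity)
    exact this.trans (by positivity)
  rw [div_mul_div_comm, div_le_div_iff₀ (by positivity) (by positivity)]
  rcases le_total R n with hRn | hnR
  · rw [min_eq_left hRn] at hmin
    calc c * R * (r + n) ^ 2 ≤ r * (R + n) ^ 2 := by gcongr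
      _ ≤ r * (4 * (R + n) ^ 2) := by gcongr; linarith [sq_nonneg (R + n)]
  rw [min_eq_right hnR] at hmin
  rcases le_total r n with hrn | hnr
  · calc c * R * (r + n) ^ 2 ≤ c * R * (2 * n) ^ 2 := by gcongr; linarith
      _ = 4 * (c * n) * (R * n) := by ring
      _ ≤ 4 * r * (R * n) := by gcongr
      _ ≤ r * (4 * (R + n) ^ 2) := by nlinarith [sq_nonneg (R - n)]
  · calc c * R * (r + n) ^ 2 ≤ 1 * R * (2 * r) ^ 2 := by gcongr; linarith
      _ = r * (4 * (r * R)) := by ring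
      _ ≤ r * (4 * (R + n) ^ 2) := by gcongr; nlinarith

theorem exp_neg_two_mul_min_le_rpow {m n s δ : ℝ} (hm : 1 ≤ m) (hn : exp 2 ≤ n) (hs : 1 ≤ s)
    (hδ : 0 ≤ δ) (hδn : δ * log n ≤ 1) :
    exp (-2) * min (m ^ s) n ≤ m ^ (s - 2 * δ) := by
  have hM : 2 ≤ log n := by simpa using log_le_log (exp_pos 2) hn
  have hL : 0 ≤ log m := log_nonneg hm
  have hexp : min (log m * s) (log n) - 2 ≤ log m * (s - 2 * δ) := by
    rcases le_total (log m * s) (log n) with h | h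
    · rw [min_eq_left h]
      nlinarith [mul_le_mul_of_nonneg_left (show log m ≤ log n by nlinarith) hδ]
    · rw [min_eq_right h]
      nlinarith [mul_nonneg hL (sub_nonneg.mpr hs), mul_nonneg hδ hL]
  have hm0 : 0 < m := one_pos.trans_le hm
  rw [rpow_def_of_pos hm0, rpow_def_of_pos hm0, ← exp_log ((exp_pos 2).trans_le hn),
    ← exp_monotone.map_min, ← exp_add, exp_le_exp]
  linarith

/-- `n² μ_m² * summandWeight n p a m` is the `m`-th summand of `S_n(a)`. -/
noncomputable def summandWeight (n p a m : ℝ) : ℝ :=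
  m ^ (1 + 2 * a) * log m / (m ^ (1 + 2 * a + 2 * p) + n) ^ 2

theorem summandWeight_nonneg {n p a m : ℝ} (hm : 1 ≤ m) : 0 ≤ summandWeight n p a m :=
  div_nonneg (mul_nonneg (rpow_nonneg (zero_le_one.trans hm) _) (log_nonneg hm)) (sq_nonneg _)

theorem summandWeight_eq {n p a m : ℝ} (hm : 0 < m) :
    summandWeight n p a m = log m / m ^ (2 * p) *
      (m ^ (1 + 2 * a + 2 * p) / (m ^ (1 + 2 * a + 2 * p) + n) ^ 2) := by
  rw [summandWeight, rpow_add hm (1 + 2 * a)]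
  field_simp

theorem summandWeight_le {n p a m : ℝ} (hm : 0 < m) (hn : 0 ≤ n) (hε : 0 < 1 + 2 * a + 4 * p) :
    summandWeight n p a m ≤ 1 / (1 + 2 * a + 4 * p) := by
  have hsq : m ^ (1 + 2 * a) * m ^ (1 + 2 * a + 4 * p) =
      m ^ (1 + 2 * a + 2 * p) * m ^ (1 + 2 * a + 2 * p) := by
    rw [← rpow_add hm, ← rpow_add hm]
    ring_nf
  set s := 1 + 2 * a + 2 * p
  set ε := 1 + 2 * a + 4 * p
  rw [summandWeight, div_le_iff₀ (by positivity)]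
  calc m ^ (1 + 2 * a) * log m ≤ m ^ (1 + 2 * a) * (m ^ ε / ε) :=
        mul_le_mul_of_nonneg_left (log_le_rpow_div hm.le hε) (rpow_nonneg hm.le _)
    _ = 1 / ε * (m ^ s * m ^ s) := by rw [← hsq]; ring
    _ ≤ 1 / ε * (m ^ s + n) ^ 2 := by
        have := rpow_nonneg hm.le s
        gcongr
        nlinarith

theorem summable_mul_summandWeight {n p a : ℝ} {c : ℕ → ℝ} (hn : 0 ≤ n)
    (hε : 0 < 1 + 2 * a + 4 * p) (hc : ∀ i, 0 ≤ c i) (hcs : Summable c) :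
    Summable fun i : ℕ => c i * summandWeight n p a ((i : ℝ) + 1) :=
  (hcs.mul_right (1 / (1 + 2 * a + 4 * p))).of_nonneg_of_le
    (fun i => mul_nonneg (hc i) (summandWeight_nonneg (by simp)))
    (fun i => mul_le_mul_of_nonneg_left (summandWeight_le (by positivity) hn hε) (hc i))

theorem exp_neg_two_div_four_mul_summandWeight_le {n p a b m : ℝ} (hm : 1 ≤ m)
    (hn : exp 2 ≤ n) (hp : 0 ≤ p) (hb : 0 ≤ b) (hab : b - 1 / log n ≤ a) (hba : a ≤ b) :
    exp (-2) / 4 * summandWeight n p b m ≤ summandWeight n p a m := by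
  have hm0 : 0 < m := one_pos.trans_le hm
  have hM : 0 < log n := by linarith [log_le_log (exp_pos 2) hn, log_exp 2]
  have hmin := exp_neg_two_mul_min_le_rpow (s := 1 + 2 * b + 2 * p) (δ := b - a) hm hn
    (by linarith) (sub_nonneg.2 hba) ((le_div_iff₀ hM).1 (by linarith))
  rw [show 1 + 2 * b + 2 * p - 2 * (b - a) = 1 + 2 * a + 2 * p by ring] at hmin
  have hratio := div_add_sq_le_of_min_le (exp_le_one_iff.2 (by norm_num))
    ((exp_pos 2).trans_le hn) (rpow_pos_of_pos hm0 _)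
    (rpow_le_rpow_of_exponent_le hm (by linarith)) hmin
  rw [summandWeight_eq hm0, summandWeight_eq hm0, mul_left_comm]
  exact mul_le_mul_of_nonneg_left hratio (div_nonneg (log_nonneg hm) (rpow_nonneg hm0.le _))

/-- Lemma 5.1 (first inequality, in terms of S_n): there is an absolute constant
K > 0 (e.g. K = e⁻²/4) such that for every p ≥ 0, square-summable μ, n ≥ e²,
ᾱ > 0 and α ∈ [ᾱ − 1/log n, ᾱ], one has S_n(α) ≥ K S_n(ᾱ). -/
theorem stmt_13 :
    ∃ K > (0 : ℝ), ∀ (p : ℝ), 0 ≤ p → ∀ (μ : ℕ → ℝ),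
      Summable (fun i : ℕ => (μ (i + 1)) ^ 2) →
      ∀ n : ℝ, Real.exp 2 ≤ n → ∀ ᾱ > (0 : ℝ), ∀ α : ℝ,
        ᾱ - 1 / Real.log n ≤ α → α ≤ ᾱ →
        K * (∑' i : ℕ, n ^ 2 * ((i : ℝ) + 1) ^ (1 + 2 * ᾱ) * (μ (i + 1)) ^ 2 *
              Real.log ((i : ℝ) + 1) / ((((i : ℝ) + 1) ^ (1 + 2 * ᾱ + 2 * p) + n) ^ 2))
          ≤ ∑' i : ℕ, n ^ 2 * ((i : ℝ) + 1) ^ (1 + 2 * α) * (μ (i + 1)) ^ 2 *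
              Real.log ((i : ℝ) + 1) / ((((i : ℝ) + 1) ^ (1 + 2 * α + 2 * p) + n) ^ 2) := by
  refine ⟨exp (-2) / 4, by positivity, fun p hp μ hμ n hn ᾱ hᾱ α hlo hhi => ?_⟩
  set c : ℕ → ℝ := fun i => n ^ 2 * μ (i + 1) ^ 2 with hc_def
  have hsummand (a : ℝ) : (fun i : ℕ => n ^ 2 * ((i : ℝ) + 1) ^ (1 + 2 * a) * μ (i + 1) ^ 2 *
      log ((i : ℝ) + 1) / (((i : ℝ) + 1) ^ (1 + 2 * a + 2 * p) + n) ^ 2) =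
      fun i => c i * summandWeight n p a ((i : ℝ) + 1) := by
    ext i; simp only [summandWeight, hc_def]; ring
  have hc (i : ℕ) : 0 ≤ c i := by positivity
  have hM : 2 ≤ log n := by linarith [log_le_log (exp_pos 2) hn, log_exp 2]
  have hα : 0 < 1 + 2 * α + 4 * p := by
    linarith [one_div_le_one_div_of_le two_pos hM]
  have hterm (i : ℕ) :
      exp (-2) / 4 * (c i * summandWeight n p ᾱ ((i : ℝ) + 1)) ≤
        c i * summandWeight n p α ((i : ℝ) + 1) := by
    rw [mul_left_comm]
    exact mul_le_mul_of_nonneg_left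
      (exp_neg_two_div_four_mul_summandWeight_le (by simp) hn hp hᾱ.le hlo hhi) (hc i)
  have hsum := summable_mul_summandWeight ((exp_pos 2).le.trans hn) hα hc (hμ.mul_left (n ^ 2))
  rw [hsummand, hsummand, ← tsum_mul_left]
  exact (hsum.of_nonneg_of_le (fun i => by
    have := summandWeight_nonneg (n := n) (p := p) (a := ᾱ) (show 1 ≤ (i : ℝ) + 1 by simp)
    positivity) hterm).tsum_le_tsum hterm hsum
end

section
/- Fix p ≥ 0. For independent random variables Y_i = i^{−p} μ_i + n^{−1/2} Z_i with Z_i standard normal, consider M_n(α) = ∑_{i=1}^∞ n (log i)/(i^{1+2α+2p} + n) − ∑_{i=1}^∞ n² i^{1+2α+2p} (log i) Y_i² / (i^{1+2α+2p} + n)². Then the variance of (1+2α+2p) M_n(α) / n^{1/(1+2α+2p)} is bounded above by a universal constant times n^{−1/(1+2α+2p)} (log n)² (1 + h_n(α)), uniformly in α > 0 and in the sequence μ ∈ ℓ². -/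
/-
Write β = 1 + 2α + 2p, M = n^{1/β} (so that M^β = n) and let
w_j = n² j^β log j / (j^β + n)² be the weight of Y_j² in M_n(α); the variance is then
∑ w_j² (2/n² + 4 j^{-2p} μ_j²/n).

For every j one has w_j ≤ n log n / β, because w_j ≤ (n²/β) log(j^β + n)/(j^β + n) and
log x / x decreases beyond e. For j ≥ M the weight moreover decays:
w_j ≤ n (M/j)^β log j, and splitting log j = log M + log (j/M) with
log (j/M) ≤ (4/β) (j/M)^{β/4} gives w_j ≤ 5 (n log n / β) (M/j)^{3/4}. At most M indices
satisfy j ≤ M, and ∑_{j > M} (M/j)^{3/2} = O(M) by comparison with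
∫_{⌊M⌋}^∞ x^{-3/2} dx, so ∑ w_j² = O(M (n log n / β)²), which accounts for the
term 2/n².
For the other term, w_j² j^{-2p} μ_j² = w_j · (the j-th summand of h_n) is at most
n log n / β times that summand.
-/

open Real Finset

lemma sum_succ_rpow_neg_le {s : ℝ} (hs : 1 < s) {K : ℕ} (hK : 0 < K) {S : Finset ℕ}
    (hS : ∀ i ∈ S, K ≤ i) :
    ∑ i ∈ S, ((i : ℝ) + 1) ^ (-s) ≤ (K : ℝ) ^ (1 - s) / (s - 1) := by
  have hK0 : (0 : ℝ) < K := by exact_mod_cast hK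
  have hsub : S ⊆ Ico K (S.sup id + 1) := fun i hi =>
    mem_Ico.2 ⟨hS i hi, Nat.lt_succ_of_le (le_sup (f := id) hi)⟩
  have hanti : AntitoneOn (fun x : ℝ => x ^ (-s)) (Set.Icc (K : ℝ) (S.sup id + 1 : ℕ)) :=
    fun x hx y _ hxy => rpow_le_rpow_of_nonpos (hK0.trans_le hx.1) hxy (by linarith)
  calc ∑ i ∈ S, ((i : ℝ) + 1) ^ (-s)
      ≤ ∑ i ∈ Ico K (S.sup id + 1), (((i + 1 : ℕ) : ℝ)) ^ (-s) := by
        push_cast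
        exact sum_le_sum_of_subset_of_nonneg hsub fun i _ _ => by positivity
    _ ≤ ∫ x in Set.Ioi (K : ℝ), x ^ (-s) :=
        hanti.sum_Ico_le_integral (integrableOn_Ioi_rpow_of_lt (by linarith) hK0)
          fun x hx => rpow_nonneg (hK0.trans hx).le _
    _ = (K : ℝ) ^ (1 - s) / (s - 1) := by
        rw [integral_Ioi_rpow_of_lt (by linarith) hK0, show -s + 1 = -(s - 1) by ring,
          show (1 : ℝ) - s = -(s - 1) by ring, neg_div_neg_eq]

lemma sum_div_succ_rpow_le {s M : ℝ} (hs : 1 < s) (hM : 1 ≤ M) {S : Finset ℕ}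
    (hS : ∀ i ∈ S, M < i + 1) :
    ∑ i ∈ S, (M / ((i : ℝ) + 1)) ^ s ≤ 2 ^ (s - 1) / (s - 1) * M := by
  set K := ⌊M⌋₊
  have hK : 0 < K := Nat.floor_pos.2 hM
  have hK0 : (0 : ℝ) < K := by exact_mod_cast hK
  have hM0 : 0 < M := by linarith
  have hKM : (K : ℝ) ≤ M := Nat.floor_le hM0.le
  have hMK : M ≤ 2 * K := by
    have := Nat.lt_floor_add_one M
    have : (1 : ℝ) ≤ K := by exact_mod_cast hK
    linarith
  have hS' : ∀ i ∈ S, K ≤ i := fun i hi => by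
    have : (K : ℝ) < i + 1 := hKM.trans_lt (hS i hi)
    exact_mod_cast Nat.lt_succ_iff.1 (by exact_mod_cast this)
  have hsplit : ∀ i ∈ S, (M / ((i : ℝ) + 1)) ^ s = M ^ s * ((i : ℝ) + 1) ^ (-s) :=
    fun i _ => by rw [div_rpow hM0.le (by positivity), rpow_neg (by positivity), div_eq_mul_inv]
  have hpow : M ^ s * (K : ℝ) ^ (1 - s) = M * (M / K) ^ (s - 1) := by
    rw [div_rpow hM0.le hK0.le, show 1 - s = -(s - 1) by ring, rpow_neg hK0.le,
      rpow_sub_one hM0.ne']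
    field_simp
  calc ∑ i ∈ S, (M / ((i : ℝ) + 1)) ^ s = M ^ s * ∑ i ∈ S, ((i : ℝ) + 1) ^ (-s) := by
        rw [sum_congr rfl hsplit, mul_sum]
    _ ≤ M ^ s * ((K : ℝ) ^ (1 - s) / (s - 1)) := by
        gcongr
        exact sum_succ_rpow_neg_le hs hK hS'
    _ = M * (M / K) ^ (s - 1) / (s - 1) := by rw [← hpow]; ring
    _ ≤ M * 2 ^ (s - 1) / (s - 1) := by
        gcongr
        rw [div_le_iff₀ hK0]; linarith
    _ = 2 ^ (s - 1) / (s - 1) * M := by ring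

lemma card_filter_succ_le {M : ℝ} (hM : 0 ≤ M) (S : Finset ℕ) :
    (#(S.filter fun i : ℕ => (i : ℝ) + 1 ≤ M) : ℝ) ≤ M := by
  have hsub : S.filter (fun i : ℕ => (i : ℝ) + 1 ≤ M) ⊆ range ⌊M⌋₊ := fun i hi => by
    rw [mem_range, Nat.lt_iff_add_one_le]
    exact Nat.le_floor (by exact_mod_cast (mem_filter.1 hi).2)
  calc (#(S.filter fun i : ℕ => (i : ℝ) + 1 ≤ M) : ℝ) ≤ ⌊M⌋₊ := by
        exact_mod_cast (card_le_card hsub).trans_eq (card_range _)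
    _ ≤ M := Nat.floor_le hM

noncomputable def scoreWeight (n β j : ℝ) : ℝ := n ^ 2 * j ^ β * log j / (j ^ β + n) ^ 2

lemma scoreWeight_nonneg {n β j : ℝ} (hj : 1 ≤ j) : 0 ≤ scoreWeight n β j := by
  have := log_nonneg hj
  unfold scoreWeight
  positivity

lemma scoreWeight_le {n β j : ℝ} (hn : exp 1 ≤ n) (hβ : 0 < β) (hj : 1 ≤ j) :
    scoreWeight n β j ≤ n * log n / β := by
  have hn0 : 0 < n := (exp_pos 1).trans_le hn
  set t := j ^ β
  have ht : 1 ≤ t := one_le_rpow hj hβ.le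
  have hlog : log t = β * log j := log_rpow (by linarith) β
  have hlogt : 0 ≤ log t := log_nonneg ht
  calc scoreWeight n β j = n ^ 2 / β * (t / (t + n)) * (log t / (t + n)) := by
        show n ^ 2 * t * log j / (t + n) ^ 2 = _
        rw [hlog]
        field_simp
    _ ≤ n ^ 2 / β * 1 * (log (t + n) / (t + n)) := by
        gcongr
        · rw [div_le_one (by positivity)]; linarith
        · linarith
    _ ≤ n ^ 2 / β * 1 * (log n / n) :=
        mul_le_mul_of_nonneg_left
          (log_div_self_antitoneOn hn (show exp 1 ≤ t + n by linarith) (by linarith))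
          (by positivity)
    _ = n * log n / β := by field_simp

lemma scoreWeight_le_of_le {n β j : ℝ} (hn : exp 1 ≤ n) (hβ : 1 ≤ β)
    (hj : n ^ (1 / β) ≤ j) :
    scoreWeight n β j ≤ 5 * (n * log n / β) * (n ^ (1 / β) / j) ^ (3 / 4 : ℝ) := by
  have hn0 : 0 < n := (exp_pos 1).trans_le hn
  have hlogn : 1 ≤ log n := by rwa [le_log_iff_exp_le hn0]
  have hMβ : (n ^ (1 / β)) ^ β = n := by rw [one_div, rpow_inv_rpow hn0.le (by positivity)]
  set M := n ^ (1 / β)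
  have hM : 1 ≤ M := one_le_rpow (by linarith [add_one_le_exp 1]) (by positivity)
  have hj0 : 0 < j := by linarith
  set u := M / j
  have hu0 : 0 < u := by positivity
  have hu1 : u ≤ 1 := (div_le_one hj0).2 hj
  have hlogj : log j = log n / β + log (j / M) := by
    rw [log_div hj0.ne' (by positivity), log_rpow hn0]
    field_simp
    ring
  have hlog_ratio : log (j / M) ≤ 4 / β * u ^ (-(β / 4)) := by
    calc log (j / M) ≤ (j / M) ^ (β / 4) / (β / 4) :=
          log_le_rpow_div (by positivity) (by positivity)
      _ = 4 / β * u ^ (-(β / 4)) := by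
        rw [rpow_neg hu0.le, ← inv_rpow hu0.le, inv_div]
        field_simp
  have hdecay : scoreWeight n β j ≤ n * u ^ β * log j := by
    have ht : 0 < j ^ β := by positivity
    have hlog : 0 ≤ log j := log_nonneg (by linarith)
    calc scoreWeight n β j ≤ n ^ 2 * j ^ β * log j / (j ^ β) ^ 2 := by
          unfold scoreWeight
          gcongr
          linarith
      _ = n * u ^ β * log j := by
          rw [div_rpow (by positivity) hj0.le, hMβ]
          field_simp
  have hu_pow : u ^ β * u ^ (-(β / 4)) = u ^ (3 * β / 4) := by
    rw [← rpow_add hu0]; ring_nf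
  have h1 : u ^ β ≤ u ^ (3 / 4 : ℝ) :=
    rpow_le_rpow_of_exponent_ge hu0 hu1 (by linarith)
  have h2 : u ^ (3 * β / 4) ≤ u ^ (3 / 4 : ℝ) :=
    rpow_le_rpow_of_exponent_ge hu0 hu1 (by linarith)
  calc scoreWeight n β j ≤ n * u ^ β * log j := hdecay
    _ ≤ n * u ^ β * (log n / β + 4 / β * u ^ (-(β / 4))) := by
        rw [hlogj]; gcongr
    _ = n / β * (u ^ β * log n + 4 * (u ^ β * u ^ (-(β / 4)))) := by
        field_simp
    _ ≤ n / β * (u ^ (3 / 4 : ℝ) * log n + 4 * (u ^ (3 / 4 : ℝ) * log n)) := by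
        rw [hu_pow]
        gcongr
        · nlinarith [rpow_nonneg hu0.le (3 / 4 : ℝ)]
    _ = 5 * (n * log n / β) * u ^ (3 / 4 : ℝ) := by ring

lemma sum_scoreWeight_sq_le {n β : ℝ} (hn : exp 1 ≤ n) (hβ : 1 ≤ β) (S : Finset ℕ) :
    ∑ i ∈ S, scoreWeight n β ((i : ℝ) + 1) ^ 2
      ≤ 101 * n ^ (1 / β) * (n * log n / β) ^ 2 := by
  have hM : 1 ≤ n ^ (1 / β) := one_le_rpow (by linarith [add_one_le_exp 1]) (by positivity)
  set M := n ^ (1 / β)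
  set A := n * log n / β
  have hw0 : ∀ i : ℕ, 0 ≤ scoreWeight n β ((i : ℝ) + 1) := fun i =>
    scoreWeight_nonneg (by linarith [i.cast_nonneg (α := ℝ)])
  set near := S.filter fun i : ℕ => (i : ℝ) + 1 ≤ M
  set far := S.filter fun i : ℕ => ¬ (i : ℝ) + 1 ≤ M
  have hnear : ∑ i ∈ near, scoreWeight n β ((i : ℝ) + 1) ^ 2 ≤ M * A ^ 2 := by
    calc _ ≤ #near • A ^ 2 :=
          sum_le_card_nsmul _ _ _ fun i _ => pow_le_pow_left₀ (hw0 i)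
            (scoreWeight_le hn (by linarith) (by linarith [i.cast_nonneg (α := ℝ)])) 2
      _ ≤ M * A ^ 2 := by
          rw [nsmul_eq_mul]
          gcongr
          exact card_filter_succ_le (by linarith) S
  have hfar : ∑ i ∈ far, scoreWeight n β ((i : ℝ) + 1) ^ 2 ≤ 100 * M * A ^ 2 := by
    have hpt : ∀ i ∈ far,
        scoreWeight n β ((i : ℝ) + 1) ^ 2
          ≤ 25 * A ^ 2 * (M / ((i : ℝ) + 1)) ^ (3 / 2 : ℝ) := by
      intro i hi
      have hiM : M ≤ (i : ℝ) + 1 := (not_le.1 (mem_filter.1 hi).2).le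
      calc scoreWeight n β ((i : ℝ) + 1) ^ 2
          ≤ (5 * A * (M / ((i : ℝ) + 1)) ^ (3 / 4 : ℝ)) ^ 2 :=
            pow_le_pow_left₀ (hw0 i) (scoreWeight_le_of_le hn hβ hiM) 2
        _ = 25 * A ^ 2 * (M / ((i : ℝ) + 1)) ^ (3 / 2 : ℝ) := by
            rw [mul_pow, ← rpow_mul_natCast (by positivity)]
            norm_num only [Nat.cast_ofNat]
            ring
    have htail := sum_div_succ_rpow_le (s := 3 / 2) (by norm_num) hM (S := far)
      fun i hi => not_le.1 (mem_filter.1 hi).2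
    have hsqrt_two : (2 : ℝ) ^ (3 / 2 - 1 : ℝ) ≤ 2 := by
      calc (2 : ℝ) ^ (3 / 2 - 1 : ℝ) ≤ 2 ^ (1 : ℝ) :=
            rpow_le_rpow_of_exponent_le (by norm_num) (by norm_num)
        _ = 2 := rpow_one 2
    calc _ ≤ ∑ i ∈ far, 25 * A ^ 2 * (M / ((i : ℝ) + 1)) ^ (3 / 2 : ℝ) := sum_le_sum hpt
      _ = 25 * A ^ 2 * ∑ i ∈ far, (M / ((i : ℝ) + 1)) ^ (3 / 2 : ℝ) := by rw [mul_sum]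
      _ ≤ 25 * A ^ 2 * (2 / (3 / 2 - 1) * M) := by
          gcongr
          exact htail.trans (by gcongr)
      _ = 100 * M * A ^ 2 := by ring
  rw [← sum_filter_add_sum_filter_not S (fun i : ℕ => (i : ℝ) + 1 ≤ M)]
  linarith

lemma tsum_scoreWeight_sq_mul_le {n β p : ℝ} (hn : exp 1 ≤ n) (hβ : 1 ≤ β) (hp : 0 ≤ p)
    {μ : ℕ → ℝ} (hμ : Summable fun i : ℕ => μ (i + 1) ^ 2) :
    ∑' i : ℕ, scoreWeight n β ((i : ℝ) + 1) ^ 2 *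
        (2 / n ^ 2 + 4 * ((i : ℝ) + 1) ^ (-2 * p) * μ (i + 1) ^ 2 / n)
      ≤ 2 / n ^ 2 * (101 * n ^ (1 / β) * (n * log n / β) ^ 2) + 4 / n * (n * log n / β) *
        ∑' i : ℕ, scoreWeight n β ((i : ℝ) + 1) *
          (((i : ℝ) + 1) ^ (-2 * p) * μ (i + 1) ^ 2) := by
  have hn0 : 0 < n := (exp_pos 1).trans_le hn
  have hA : 0 ≤ n * log n / β := by
    have := log_nonneg (one_le_exp zero_le_one |>.trans hn)
    positivity
  set A := n * log n / β
  have hj : ∀ i : ℕ, 1 ≤ (i : ℝ) + 1 := fun i => by linarith [i.cast_nonneg (α := ℝ)]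
  have hw0 : ∀ i : ℕ, 0 ≤ scoreWeight n β ((i : ℝ) + 1) := fun i =>
    scoreWeight_nonneg (hj i)
  have hwA : ∀ i : ℕ, scoreWeight n β ((i : ℝ) + 1) ≤ A := fun i =>
    scoreWeight_le hn (by linarith) (hj i)
  set b : ℕ → ℝ := fun i =>
    scoreWeight n β ((i : ℝ) + 1) * (((i : ℝ) + 1) ^ (-2 * p) * μ (i + 1) ^ 2)
  have hb0 : ∀ i, 0 ≤ b i := fun i => mul_nonneg (hw0 i) (by positivity)
  have hb : Summable b := by
    refine (hμ.mul_left A).of_nonneg_of_le hb0 fun i => ?_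
    have hpow : ((i : ℝ) + 1) ^ (-2 * p) ≤ 1 :=
      rpow_le_one_of_one_le_of_nonpos (hj i) (by linarith)
    calc b i ≤ A * (1 * μ (i + 1) ^ 2) := mul_le_mul (hwA i) (by gcongr) (by positivity) hA
      _ = A * μ (i + 1) ^ 2 := by ring
  refine tsum_le_of_sum_le' (by have : 0 ≤ ∑' i, b i := tsum_nonneg hb0; positivity) fun S => ?_
  calc ∑ i ∈ S, scoreWeight n β ((i : ℝ) + 1) ^ 2 *
        (2 / n ^ 2 + 4 * ((i : ℝ) + 1) ^ (-2 * p) * μ (i + 1) ^ 2 / n)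
      = 2 / n ^ 2 * ∑ i ∈ S, scoreWeight n β ((i : ℝ) + 1) ^ 2
        + 4 / n * ∑ i ∈ S, scoreWeight n β ((i : ℝ) + 1) * b i := by
        rw [mul_sum, mul_sum, ← sum_add_distrib]
        refine sum_congr rfl fun i _ => ?_
        simp only [b]
        ring
    _ ≤ 2 / n ^ 2 * (101 * n ^ (1 / β) * A ^ 2) + 4 / n * ∑ i ∈ S, A * b i := by
        gcongr with i
        · exact sum_scoreWeight_sq_le hn hβ S
        · exact hb0 i
        · exact hwA i
    _ ≤ 2 / n ^ 2 * (101 * n ^ (1 / β) * A ^ 2) + 4 / n * A * ∑' i, b i := by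
        rw [← mul_sum, mul_assoc (4 / n) A]
        gcongr
        exact hb.sum_le_tsum S fun i _ => hb0 i

/-- Lemma 5.2: variance bound for the normalized score process.
Since the Y_i are independent with Y_i = i^{−p} μ_i + n^{−1/2} Z_i, Z_i standard
normal, one has Var(Y_i²) = 2/n² + 4 i^{−2p} μ_i²/n, and the variance of
(1+2α+2p) M_n(α) / n^{1/(1+2α+2p)} equals the explicit series written below; it is
bounded by a universal constant times n^{−1/(1+2α+2p)} (log n)² (1 + h_n(α)),
uniformly in α > 0 and μ ∈ ℓ². -/
theorem stmt_14 :
    ∃ C > (0 : ℝ), ∀ (p : ℝ), 0 ≤ p → ∀ (μ : ℕ → ℝ),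
      Summable (fun i : ℕ => (μ (i + 1)) ^ 2) →
      ∀ n : ℝ, 3 ≤ n → ∀ α > (0 : ℝ),
        ((1 + 2 * α + 2 * p) / n ^ (1 / (1 + 2 * α + 2 * p))) ^ 2 *
          ∑' i : ℕ,
            (n ^ 2 * ((i : ℝ) + 1) ^ (1 + 2 * α + 2 * p) * Real.log ((i : ℝ) + 1) /
                ((((i : ℝ) + 1) ^ (1 + 2 * α + 2 * p) + n) ^ 2)) ^ 2 *
              (2 / n ^ 2 + 4 * ((i : ℝ) + 1) ^ (-2 * p) * (μ (i + 1)) ^ 2 / n)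
        ≤ C * n ^ (-(1 : ℝ) / (1 + 2 * α + 2 * p)) * Real.log n ^ 2 *
            (1 + (1 + 2 * α + 2 * p) / (n ^ (1 / (1 + 2 * α + 2 * p)) * Real.log n) *
              ∑' i : ℕ, n ^ 2 * ((i : ℝ) + 1) ^ (1 + 2 * α) * (μ (i + 1)) ^ 2 *
                Real.log ((i : ℝ) + 1) /
                ((((i : ℝ) + 1) ^ (1 + 2 * α + 2 * p) + n) ^ 2)) := by
  refine ⟨202, by norm_num, fun p hp μ hμ n hn α hα => ?_⟩
  have hn_e : exp 1 ≤ n := exp_one_lt_d9.le.trans (by linarith)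
  have hlogn : 0 < log n := log_pos (by linarith)
  have h_summand_eq : ∀ i : ℕ,
      n ^ 2 * ((i : ℝ) + 1) ^ (1 + 2 * α) * μ (i + 1) ^ 2 * log ((i : ℝ) + 1) /
        (((i : ℝ) + 1) ^ (1 + 2 * α + 2 * p) + n) ^ 2
      = scoreWeight n (1 + 2 * α + 2 * p) ((i : ℝ) + 1) *
          (((i : ℝ) + 1) ^ (-2 * p) * μ (i + 1) ^ 2) := fun i => by
    have hpow : ((i : ℝ) + 1) ^ (1 + 2 * α + 2 * p) * ((i : ℝ) + 1) ^ (-2 * p)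
        = ((i : ℝ) + 1) ^ (1 + 2 * α) := by
      rw [← rpow_add (by positivity)]; ring_nf
    rw [scoreWeight, ← hpow]
    ring
  have hvar := tsum_scoreWeight_sq_mul_le hn_e (show 1 ≤ 1 + 2 * α + 2 * p by linarith) hp hμ
  rw [tsum_congr h_summand_eq, neg_div, rpow_neg (by linarith)]
  set β := 1 + 2 * α + 2 * p
  set M := n ^ (1 / β)
  set H := ∑' i : ℕ,
    scoreWeight n β ((i : ℝ) + 1) * (((i : ℝ) + 1) ^ (-2 * p) * μ (i + 1) ^ 2)
  have hβ : 0 < β := by linarith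
  have hM : 0 < M := by positivity
  have hH : 0 ≤ H := tsum_nonneg fun i =>
    mul_nonneg (scoreWeight_nonneg (by linarith [i.cast_nonneg (α := ℝ)])) (by positivity)
  calc _ ≤ (β / M) ^ 2 * (2 / n ^ 2 * (101 * M * (n * log n / β) ^ 2)
          + 4 / n * (n * log n / β) * H) :=
        mul_le_mul_of_nonneg_left hvar (by positivity)
    _ = 202 * log n ^ 2 / M + 4 * (β * log n * H / M ^ 2) := by
        field_simp
        ring
    _ ≤ 202 * log n ^ 2 / M + 202 * (β * log n * H / M ^ 2) := by
        gcongr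
        norm_num
    _ = 202 * M⁻¹ * log n ^ 2 * (1 + β / (M * log n) * H) := by
        field_simp
end

section
/- Fix p ≥ 0 and μ ∈ ℓ² with ∑ i^{2β} μ_i² ≤ R² for some β, R > 0, and suppose α ≥ β/2. Then ∑_{i=1}^∞ i^{2p}/(i^{1+2α+2p} + n) ≤ C n^{−2α/(1+2α+2p)} for a constant C depending only on β and p, for all n ≥ 1. -/
/-!
Split the series at `k = ⌈n^(1/r)⌉`, where the two terms of the denominator balance. Each of
the first `k` terms is at most `k^s / n`, so they contribute `k^(s+1)/n ≲ n^(-(r-s-1)/r)`.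
Beyond `k` the terms are at most `(i+1)^(s-r)`, and Bernoulli's inequality bounds
`(y+1)^(-(1+a))` by the telescoping difference `(y^(-a) - (y+1)^(-a)) / a`, so the tail is at most
`k^(-(r-s-1)) / (r-s-1) ≤ n^(-(r-s-1)/r) / (r-s-1)`. For the theorem, `s = 2p`, `r = 1 + 2α + 2p`.
-/

open Real Finset

theorem rpow_neg_one_add_le_sub {y a : ℝ} (hy : 0 < y) (ha : 0 < a) :
    (y + 1) ^ (-(1 + a)) ≤ (y ^ (-a) - (y + 1) ^ (-a)) / a := by
  have hy1 : 0 < y + 1 := by linarith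
  -- Bernoulli: `(1 + 1/y)^(1+a) ≥ 1 + (1+a)/y`, i.e. `(y + 1 + a) y^a ≤ (y + 1)^(1+a)`.
  have hbern := one_add_mul_self_le_rpow_one_add
    (by linarith [inv_pos.2 hy] : -1 ≤ y⁻¹) (by linarith : 1 ≤ 1 + a)
  rw [show 1 + y⁻¹ = (y + 1) / y by field_simp, div_rpow hy1.le hy.le,
    rpow_add hy, rpow_add hy1, rpow_one, rpow_one] at hbern
  rw [rpow_neg hy.le, rpow_neg hy1.le, rpow_neg hy1.le, rpow_add hy1, rpow_one]
  have hu := rpow_pos_of_pos hy a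
  have hv := rpow_pos_of_pos hy1 a
  rw [inv_sub_inv hu.ne' hv.ne', le_div_iff₀ ha, inv_mul_le_iff₀ (by positivity),
    mul_div_assoc', le_div_iff₀ (by positivity)]
  field_simp at hbern
  nlinarith

theorem sum_range_add_rpow_neg_one_add_le {x a : ℝ} (hx : 0 < x) (ha : 0 < a) (m : ℕ) :
    ∑ i ∈ range m, ((i : ℝ) + x + 1) ^ (-(1 + a)) ≤ x ^ (-a) / a :=
  calc ∑ i ∈ range m, ((i : ℝ) + x + 1) ^ (-(1 + a))
      ≤ ∑ i ∈ range m, (((i : ℝ) + x) ^ (-a) - ((i + 1 : ℕ) + x) ^ (-a)) / a := by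
        refine sum_le_sum fun i _ => ?_
        rw [Nat.cast_succ, add_right_comm (i : ℝ) 1 x]
        exact rpow_neg_one_add_le_sub (y := i + x) (by positivity) ha
    _ = (x ^ (-a) - ((m : ℝ) + x) ^ (-a)) / a := by
        rw [← sum_div, sum_range_sub' (fun i : ℕ => ((i : ℝ) + x) ^ (-a)), Nat.cast_zero, zero_add]
    _ ≤ x ^ (-a) / a := by
        gcongr
        exact sub_le_self _ (by positivity)

section SeriesBound

variable {r s n : ℝ}

theorem rpow_div_rpow_add_le_rpow_sub (hn : 0 ≤ n) (i : ℕ) :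
    ((i : ℝ) + 1) ^ s / (((i : ℝ) + 1) ^ r + n) ≤ ((i : ℝ) + 1) ^ (s - r) := by
  rw [rpow_sub (by positivity)]
  gcongr
  exact le_add_of_nonneg_right hn

theorem summable_rpow_div_rpow_add (hn : 0 ≤ n) (hrs : s + 1 < r) :
    Summable fun i : ℕ => ((i : ℝ) + 1) ^ s / (((i : ℝ) + 1) ^ r + n) := by
  have hpow : Summable fun i : ℕ => ((i + 1 : ℕ) : ℝ) ^ (s - r) :=
    (summable_nat_add_iff 1).2 (summable_nat_rpow.2 (by linarith))
  push_cast at hpow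
  exact hpow.of_nonneg_of_le (fun i => by positivity) (rpow_div_rpow_add_le_rpow_sub hn)

theorem sum_range_rpow_div_rpow_add_le (hs : 0 ≤ s) (hn : 0 < n) (k : ℕ) :
    ∑ i ∈ range k, ((i : ℝ) + 1) ^ s / (((i : ℝ) + 1) ^ r + n) ≤ (k : ℝ) ^ (s + 1) / n :=
  calc ∑ i ∈ range k, ((i : ℝ) + 1) ^ s / (((i : ℝ) + 1) ^ r + n)
      ≤ ∑ _i ∈ range k, (k : ℝ) ^ s / n := by
        refine sum_le_sum fun i hi => ?_
        have hik : (i : ℝ) + 1 ≤ k := by exact_mod_cast mem_range.1 hi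
        gcongr
        exact le_add_of_nonneg_left (by positivity)
    _ = (k : ℝ) ^ (s + 1) / n := by
        rw [sum_const, card_range, nsmul_eq_mul, rpow_add_one' (Nat.cast_nonneg k) (by linarith)]
        ring

theorem tsum_rpow_div_rpow_add_nat_add_le (hn : 0 ≤ n) (hrs : s + 1 < r) {k : ℕ} (hk : 0 < k) :
    ∑' i : ℕ, ((i : ℝ) + k + 1) ^ s / (((i : ℝ) + k + 1) ^ r + n)
      ≤ (k : ℝ) ^ (-(r - s - 1)) / (r - s - 1) := by
  refine tsum_le_of_sum_range_le (fun i => by positivity) fun m => ?_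
  refine le_trans (sum_le_sum fun i _ => ?_)
    (sum_range_add_rpow_neg_one_add_le (by positivity : (0 : ℝ) < k) (by linarith) m)
  have h := rpow_div_rpow_add_le_rpow_sub (r := r) (s := s) hn (i + k)
  push_cast at h
  rwa [show -(1 + (r - s - 1)) = s - r by ring]

theorem tsum_rpow_div_rpow_add_le (hs : 0 ≤ s) (hrs : s + 1 < r) (hn : 1 ≤ n) :
    ∑' i : ℕ, ((i : ℝ) + 1) ^ s / (((i : ℝ) + 1) ^ r + n)
      ≤ (2 ^ (s + 1) + 1 / (r - s - 1)) * n ^ (-(r - s - 1) / r) := by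
  have hn0 : 0 < n := by linarith
  have hr : 0 < r := by linarith
  set N := n ^ (1 / r)
  set k := ⌈N⌉₊
  have hN : 1 ≤ N := one_le_rpow hn (by positivity)
  have hkN : N ≤ k := Nat.le_ceil N
  have hk : 0 < k := by exact_mod_cast hN.trans_lt' zero_lt_one |>.trans_le hkN
  have hk2N : (k : ℝ) ≤ 2 * N := by linarith [Nat.ceil_lt_add_one (by linarith : 0 ≤ N)]
  have head : (k : ℝ) ^ (s + 1) / n ≤ 2 ^ (s + 1) * n ^ (-(r - s - 1) / r) :=
    calc (k : ℝ) ^ (s + 1) / n ≤ (2 * N) ^ (s + 1) / n := by gcongr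
      _ = 2 ^ (s + 1) * n ^ ((s + 1) / r - 1) := by
        rw [mul_rpow zero_le_two (by positivity), ← rpow_mul hn0.le, rpow_sub_one hn0.ne']
        ring_nf
      _ = 2 ^ (s + 1) * n ^ (-(r - s - 1) / r) := by
        congr 2
        field_simp
        ring
  have tail : (k : ℝ) ^ (-(r - s - 1)) ≤ n ^ (-(r - s - 1) / r) :=
    calc (k : ℝ) ^ (-(r - s - 1)) ≤ N ^ (-(r - s - 1)) :=
          rpow_le_rpow_of_nonpos (by positivity) hkN (by linarith)
      _ = n ^ (-(r - s - 1) / r) := by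
        rw [← rpow_mul hn0.le]
        ring_nf
  rw [← (summable_rpow_div_rpow_add hn0.le hrs).sum_add_tsum_nat_add k]
  push_cast
  calc _ ≤ (k : ℝ) ^ (s + 1) / n + (k : ℝ) ^ (-(r - s - 1)) / (r - s - 1) :=
        add_le_add (sum_range_rpow_div_rpow_add_le hs hn0 k)
          (tsum_rpow_div_rpow_add_nat_add_le hn0.le hrs hk)
    _ ≤ 2 ^ (s + 1) * n ^ (-(r - s - 1) / r) + n ^ (-(r - s - 1) / r) / (r - s - 1) := by
        gcongr
        linarith
    _ = _ := by ring

end SeriesBound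

theorem stmt_15_general (β R p : ℝ) (hβ : 0 < β) (hp : 0 ≤ p) :
    ∃ C > (0 : ℝ), ∀ (μ : ℕ → ℝ),
      Summable (fun i : ℕ => ((i : ℝ) + 1) ^ (2 * β) * (μ (i + 1)) ^ 2) →
      (∑' i : ℕ, ((i : ℝ) + 1) ^ (2 * β) * (μ (i + 1)) ^ 2) ≤ R ^ 2 →
      ∀ α : ℝ, β / 2 ≤ α → ∀ n : ℝ, 1 ≤ n →
        ∑' i : ℕ, ((i : ℝ) + 1) ^ (2 * p) / (((i : ℝ) + 1) ^ (1 + 2 * α + 2 * p) + n)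
          ≤ C * n ^ (-(2 * α) / (1 + 2 * α + 2 * p)) := by
  refine ⟨2 ^ (2 * p + 1) + 1 / β, by positivity, fun _ _ _ α hα n hn => ?_⟩
  have key := tsum_rpow_div_rpow_add_le (s := 2 * p) (r := 1 + 2 * α + 2 * p)
    (by positivity) (by linarith) hn
  rw [show 1 + 2 * α + 2 * p - 2 * p - 1 = 2 * α by ring] at key
  refine key.trans ?_
  gcongr
  linarith

/-- Posterior spread bound: for α ≥ β/2,
∑ i^{2p}/(i^{1+2α+2p}+n) ≤ C n^{−2α/(1+2α+2p)} with C depending only on β, p. -/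
theorem stmt_15 (β R p : ℝ) (hβ : 0 < β) (hR : 0 < R) (hp : 0 ≤ p) :
    ∃ C > (0 : ℝ), ∀ (μ : ℕ → ℝ),
      Summable (fun i : ℕ => ((i : ℝ) + 1) ^ (2 * β) * (μ (i + 1)) ^ 2) →
      (∑' i : ℕ, ((i : ℝ) + 1) ^ (2 * β) * (μ (i + 1)) ^ 2) ≤ R ^ 2 →
      ∀ α : ℝ, β / 2 ≤ α → ∀ n : ℝ, 1 ≤ n →
        ∑' i : ℕ, ((i : ℝ) + 1) ^ (2 * p) / (((i : ℝ) + 1) ^ (1 + 2 * α + 2 * p) + n)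
          ≤ C * n ^ (-(2 * α) / (1 + 2 * α + 2 * p)) :=
  stmt_15_general β R p hβ hp
end

section
/- For 0 < α₁ < α₂ and n ≥ 3, p ≥ 0, the variance of V(α₁) − V(α₂), where V(α) = ∑_{i=1}^∞ (n² i^{2p}/(i^{1+2α+2p}+n)²)(Z_i² − 1) with Z_i i.i.d. standard normal, satisfies Var(V(α₁) − V(α₂)) ≤ C n⁴ 2^{−8α₁} for an absolute constant C. -/
open Real

lemma term_bound (p n α₁ α₂ : ℝ) (hp : 0 ≤ p) (hn : 3 ≤ n) (hα₁ : 0 < α₁)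
    (hα : α₁ < α₂) (i : ℕ) :
    (n ^ 2 * ((i : ℝ) + 1) ^ (2 * p) /
        ((((i : ℝ) + 1) ^ (1 + 2 * α₁ + 2 * p) + n) ^ 2) -
      n ^ 2 * ((i : ℝ) + 1) ^ (2 * p) /
        ((((i : ℝ) + 1) ^ (1 + 2 * α₂ + 2 * p) + n) ^ 2)) ^ 2 * 2
    ≤ (2 * n ^ 4 * 2 ^ (-8 * α₁)) * (1 / ((i : ℝ) + 1) ^ 2) := by
  have hn0 : (0:ℝ) < n := by linarith
  have hK : (0:ℝ) ≤ 2 * n ^ 4 * 2 ^ (-8 * α₁) := by positivity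
  rcases Nat.eq_zero_or_pos i with hi | hi
  · subst hi
    simp only [Nat.cast_zero, zero_add, Real.one_rpow]
    have : (0:ℝ) ≤ (2 * n ^ 4 * 2 ^ (-8 * α₁)) * (1 / (1:ℝ) ^ 2) := by positivity
    simpa using this
  set k : ℝ := (i : ℝ) + 1 with hkdef
  have hk2 : (2:ℝ) ≤ k := by
    have : (1:ℝ) ≤ (i:ℝ) := by exact_mod_cast hi
    simp [hkdef]; linarith
  have hk0 : (0:ℝ) < k := by linarith
  have hk1 : (1:ℝ) ≤ k := by linarith
  have he12 : 1 + 2 * α₁ + 2 * p ≤ 1 + 2 * α₂ + 2 * p := by linarith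
  have hd1pos : 0 < k ^ (1 + 2 * α₁ + 2 * p) + n :=
    add_pos (Real.rpow_pos_of_pos hk0 _) hn0
  have hd2pos : 0 < k ^ (1 + 2 * α₂ + 2 * p) + n :=
    add_pos (Real.rpow_pos_of_pos hk0 _) hn0
  set a : ℝ := n ^ 2 * k ^ (2 * p) / (k ^ (1 + 2 * α₁ + 2 * p) + n) ^ 2 with ha
  set b : ℝ := n ^ 2 * k ^ (2 * p) / (k ^ (1 + 2 * α₂ + 2 * p) + n) ^ 2 with hb
  have hnum : (0:ℝ) ≤ n ^ 2 * k ^ (2 * p) := by positivity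
  have hb0 : 0 ≤ b := by positivity
  have hba : b ≤ a := by
    apply div_le_div_of_nonneg_left hnum (by positivity)
    have := Real.rpow_le_rpow_of_exponent_le hk1 he12
    nlinarith [Real.rpow_pos_of_pos hk0 (1 + 2 * α₁ + 2 * p), hn0]
  have hsq : (a - b) ^ 2 ≤ a ^ 2 := by nlinarith
  -- bound a^2
  have hd1ge : k ^ (1 + 2 * α₁ + 2 * p) ≤ k ^ (1 + 2 * α₁ + 2 * p) + n := by linarith
  have hae : a ≤ n ^ 2 * k ^ (2 * p) / (k ^ (1 + 2 * α₁ + 2 * p)) ^ 2 := by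
    apply div_le_div_of_nonneg_left hnum (by positivity)
    nlinarith [Real.rpow_pos_of_pos hk0 (1 + 2 * α₁ + 2 * p)]
  have ha0 : 0 ≤ a := by positivity
  have hsq2 : a ^ 2 ≤ (n ^ 2 * k ^ (2 * p) / (k ^ (1 + 2 * α₁ + 2 * p)) ^ 2) ^ 2 :=
    pow_le_pow_left₀ ha0 hae 2
  have hrw : (n ^ 2 * k ^ (2 * p) / (k ^ (1 + 2 * α₁ + 2 * p)) ^ 2) ^ 2
      = n ^ 4 * k ^ (-(4 + 8 * α₁ + 4 * p)) := by
    have h1 : (k ^ (2 * p)) ^ 2 = k ^ (2 * p * 2) := by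
      rw [← Real.rpow_natCast (k ^ (2 * p)) 2, ← Real.rpow_mul hk0.le]
      norm_num
    have h2 : ((k ^ (1 + 2 * α₁ + 2 * p)) ^ 2) ^ 2 = k ^ ((1 + 2 * α₁ + 2 * p) * 4) := by
      rw [← Real.rpow_natCast (k ^ (1 + 2 * α₁ + 2 * p)) 2, ← Real.rpow_mul hk0.le,
        ← Real.rpow_natCast _ 2, ← Real.rpow_mul hk0.le]
      norm_num
      congr 1
      ring
    rw [div_pow, mul_pow, h1, h2, mul_div_assoc, ← Real.rpow_sub hk0]
    ring_nf
  have hkey : k ^ (-(4 + 8 * α₁ + 4 * p)) ≤ 2 ^ (-8 * α₁) * (1 / k ^ 2) := by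
    have s1 : k ^ (-(4 + 8 * α₁ + 4 * p)) ≤ k ^ (-(4 + 8 * α₁)) :=
      Real.rpow_le_rpow_of_exponent_le hk1 (by linarith)
    have s2 : k ^ (-(4 + 8 * α₁)) = k ^ (-(2 + 8 * α₁)) * k ^ (-(2:ℝ)) := by
      rw [← Real.rpow_add hk0]; ring_nf
    have s3 : k ^ (-(2 + 8 * α₁)) ≤ (2:ℝ) ^ (-(2 + 8 * α₁)) :=
      Real.rpow_le_rpow_of_nonpos two_pos hk2 (by linarith)
    have s4 : (2:ℝ) ^ (-(2 + 8 * α₁)) ≤ (2:ℝ) ^ (-8 * α₁) :=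
      Real.rpow_le_rpow_of_exponent_le one_le_two (by linarith)
    have s5 : k ^ (-(2:ℝ)) = 1 / k ^ 2 := by
      rw [Real.rpow_neg hk0.le, ← Real.rpow_natCast k 2]
      norm_num
    calc k ^ (-(4 + 8 * α₁ + 4 * p)) ≤ k ^ (-(4 + 8 * α₁)) := s1
      _ = k ^ (-(2 + 8 * α₁)) * k ^ (-(2:ℝ)) := s2
      _ ≤ (2:ℝ) ^ (-8 * α₁) * (1 / k ^ 2) := by
          rw [s5]
          exact mul_le_mul (s3.trans s4) le_rfl (by positivity) (by positivity)
  calc (a - b) ^ 2 * 2 ≤ a ^ 2 * 2 := by linarith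
    _ ≤ (n ^ 4 * k ^ (-(4 + 8 * α₁ + 4 * p))) * 2 := by rw [← hrw]; linarith
    _ ≤ (n ^ 4 * (2 ^ (-8 * α₁) * (1 / k ^ 2))) * 2 := by
        have h := mul_le_mul_of_nonneg_left hkey (by positivity : (0:ℝ) ≤ n ^ 4)
        linarith
    _ = (2 * n ^ 4 * 2 ^ (-8 * α₁)) * (1 / k ^ 2) := by ring

/-- Variance bound for V(α₁) − V(α₂), where V(α) = ∑ (n² i^{2p}/(i^{1+2α+2p}+n)²)(Z_i²−1)
with Z_i i.i.d. standard normal: since Var(Z_i²) = 2 and the Z_i are independent,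
Var(V(α₁) − V(α₂)) equals the explicit series below, and it is bounded by
C n⁴ 2^{−8α₁} for an absolute constant C. -/
theorem stmt_19 :
    ∃ C > (0 : ℝ), ∀ (p : ℝ), 0 ≤ p → ∀ (n : ℝ), 3 ≤ n →
      ∀ (α₁ α₂ : ℝ), 0 < α₁ → α₁ < α₂ →
        ∑' i : ℕ,
            (n ^ 2 * ((i : ℝ) + 1) ^ (2 * p) /
                ((((i : ℝ) + 1) ^ (1 + 2 * α₁ + 2 * p) + n) ^ 2) -
              n ^ 2 * ((i : ℝ) + 1) ^ (2 * p) /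
                ((((i : ℝ) + 1) ^ (1 + 2 * α₂ + 2 * p) + n) ^ 2)) ^ 2 * 2
          ≤ C * n ^ 4 * 2 ^ (-8 * α₁) := by
  refine ⟨6, by norm_num, fun p hp n hn α₁ α₂ hα₁ hα => ?_⟩
  set K : ℝ := 2 * n ^ 4 * 2 ^ (-8 * α₁) with hKdef
  have hn0 : (0:ℝ) < n := by linarith
  have hK0 : 0 ≤ K := by positivity
  have hzeta : HasSum (fun i : ℕ => (1:ℝ) / ((i : ℝ) + 1) ^ 2) (π ^ 2 / 6) := by
    have h2 := (hasSum_nat_add_iff (f := fun m : ℕ => (1:ℝ) / (m : ℝ) ^ 2) 1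
      (g := π ^ 2 / 6)).2 (by simpa using hasSum_zeta_two)
    refine h2.congr_fun fun i => ?_
    push_cast
    ring
  have hsumg : Summable (fun i : ℕ => K * ((1:ℝ) / ((i : ℝ) + 1) ^ 2)) :=
    hzeta.summable.mul_left K
  have hbound := term_bound p n α₁ α₂ hp hn hα₁ hα
  have hnonneg : ∀ i : ℕ,
      0 ≤ (n ^ 2 * ((i : ℝ) + 1) ^ (2 * p) /
          ((((i : ℝ) + 1) ^ (1 + 2 * α₁ + 2 * p) + n) ^ 2) -
        n ^ 2 * ((i : ℝ) + 1) ^ (2 * p) /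
          ((((i : ℝ) + 1) ^ (1 + 2 * α₂ + 2 * p) + n) ^ 2)) ^ 2 * 2 := by
    intro i; positivity
  have hsumf : Summable _ := Summable.of_nonneg_of_le hnonneg hbound hsumg
  calc _ ≤ ∑' i : ℕ, K * ((1:ℝ) / ((i : ℝ) + 1) ^ 2) :=
        Summable.tsum_le_tsum hbound hsumf hsumg
    _ = K * (π ^ 2 / 6) := by rw [tsum_mul_left, hzeta.tsum_eq]
    _ ≤ K * 3 := by
        have hpi : π ≤ 4 := Real.pi_le_four
        have : π ^ 2 / 6 ≤ 3 := by nlinarith [Real.pi_pos]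
        nlinarith
    _ = 6 * n ^ 4 * 2 ^ (-8 * α₁) := by rw [hKdef]; ring
end
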